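/- arXiv:2212.10586 — 4 statements merged into one kernel-verified Lean document; each statement's English description precedes it below -/
import Mathlib

section
/- For all integers k ≥ 1 and m ≥ 0, the number of cyclic compositions of 2k+1 into k parts having exactly m parts that are at least 2 (i.e., the number of equivalence classes under cyclic rotation of compositions of 2k+1 into k parts with exactly m parts ≥ 2) equals the Narayana number N_{k,m}. -/
/-- The Narayana numbers: `N 0 0 = 1`, `N n 0 = 0` for `n ≥ 1`, and
`N n k = (1/n) * binom(n,k) * binom(n,k-1)` for `k ≥ 1` (the division is exact). -/
def narayana (n k : ℕ) : ℕ :=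
  if k = 0 then (if n = 0 then 1 else 0) else n.choose k * n.choose (k - 1) / n

/-- `μ` is a composition of `n` into `k` parts. -/
def IsCompositionOf (n k : ℕ) (μ : List ℕ) : Prop :=
  μ.length = k ∧ (∀ x ∈ μ, 1 ≤ x) ∧ μ.sum = n

/-- The number of cyclic compositions of `n` into `k` parts having exactly `m` parts
that are at least 2, i.e. the number of equivalence classes, under cyclic rotation,
of compositions of `n` into `k` parts with exactly `m` parts `≥ 2`. -/
noncomputable def cyclicCompCount (n k m : ℕ) : ℕ :=
  Nat.card (Quotient (Setoid.comap
    (Subtype.val :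
      {μ : List ℕ // IsCompositionOf n k μ ∧ μ.countP (fun x => 2 ≤ x) = m} → List ℕ)
    (List.IsRotated.setoid ℕ)))

open Finset

lemma aux_sum_map_range (f : ℕ → ℕ) (m : ℕ) :
    (List.map f (List.range m)).sum = ∑ i ∈ Finset.range m, f i := by
  induction m with
  | zero => simp
  | succ m ih =>
      rw [List.range_succ, List.map_append, List.sum_append, Finset.sum_range_succ, ih]; simp

lemma aux_sum_multichoose (k n : ℕ) :
    ∑ b ∈ range (n+1), Nat.multichoose k b = Nat.multichoose (k+1) n := by
  induction n with
  | zero => simp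
  | succ n ih =>
      rw [Finset.sum_range_succ, ih, Nat.multichoose_succ_succ, Nat.add_comm]

lemma aux_length_antidiagonalTuple : ∀ (k n : ℕ),
    (List.Nat.antidiagonalTuple k n).length = Nat.multichoose k n
  | 0, 0 => by simp
  | 0, _ + 1 => by simp
  | k + 1, n => by
      rw [List.Nat.antidiagonalTuple, List.length_flatMap, List.Nat.antidiagonal,
        List.map_map]
      have h1 : ∀ i ∈ List.range (n+1),
          ((fun (ni : ℕ × ℕ) =>
            (List.map (fun x => (Fin.cons ni.1 x : Fin (k+1) → ℕ))
              (List.Nat.antidiagonalTuple k ni.2)).length) ∘ fun i => (i, n - i)) i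
            = Nat.multichoose k (n - i) := by
        intro i _
        simp [aux_length_antidiagonalTuple k (n - i)]
      rw [List.map_congr_left h1, aux_sum_map_range, ← aux_sum_multichoose k n,
        ← Finset.sum_range_reflect (fun b => Nat.multichoose k b) (n+1)]
      refine Finset.sum_congr rfl fun i hi => ?_
      have hi' := Nat.lt_succ_iff.mp (Finset.mem_range.mp hi)
      congr 1

lemma aux_card_sumFiber (m s : ℕ) :
    Nat.card {h : Fin m → ℕ // ∑ j, h j = s} = Nat.multichoose m s := by
  have e : {h : Fin m → ℕ // ∑ j, h j = s} ≃ (Finset.Nat.antidiagonalTuple m s : Finset _) :=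
    Equiv.subtypeEquivRight fun h => (Finset.Nat.mem_antidiagonalTuple).symm
  rw [Nat.card_congr e, Nat.card_eq_fintype_card, Fintype.card_coe]
  rw [← aux_length_antidiagonalTuple m s]
  rfl

lemma aux_countP_ofFn {n : ℕ} (f : Fin n → ℕ) (p : ℕ → Bool) :
    (List.ofFn f).countP p = (Finset.univ.filter fun i => p (f i) = true).card := by
  rw [Finset.card_filter]
  induction n with
  | zero => simp
  | succ n ih =>
      simp only [List.ofFn_succ, List.countP_cons, Fin.sum_univ_succ, ih, Nat.add_comm]

-- Step-1 equivalence: lists to tuples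
noncomputable def equivTuple (n k m : ℕ) :
    {f : Fin k → ℕ // (∀ i, 1 ≤ f i) ∧ ∑ i, f i = n ∧
        (Finset.univ.filter fun i => 2 ≤ f i).card = m}
    ≃ {μ : List ℕ // IsCompositionOf n k μ ∧ μ.countP (fun x => 2 ≤ x) = m} := by
  have key : ∀ f : Fin k → ℕ,
      (IsCompositionOf n k (List.ofFn f) ∧ (List.ofFn f).countP (fun x => 2 ≤ x) = m) ↔
      ((∀ i, 1 ≤ f i) ∧ ∑ i, f i = n ∧ (Finset.univ.filter fun i => 2 ≤ f i).card = m) := by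
    intro f
    rw [IsCompositionOf]
    simp only [List.length_ofFn, List.forall_mem_ofFn_iff, List.sum_ofFn,
      aux_countP_ofFn f (fun x => 2 ≤ x)]
    simp only [decide_eq_true_eq]
    tauto
  refine Equiv.ofBijective (fun f => ⟨List.ofFn f.1, (key f.1).mpr f.2⟩) ⟨?_, ?_⟩
  · intro f g hfg
    apply Subtype.ext
    exact List.ofFn_injective (congrArg Subtype.val hfg)
  · rintro ⟨μ, hμ⟩
    have hlen : μ.length = k := hμ.1.1
    refine ⟨⟨fun i => μ[(i : ℕ)]'(by omega), ?_⟩, ?_⟩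
    · rw [← key]
      have : List.ofFn (fun i : Fin k => μ[(i : ℕ)]'(by omega)) = μ := by
        apply List.ext_getElem (by simp [hlen])
        intro j h1 h2
        simp
      rw [this]
      exact hμ
    · apply Subtype.ext
      apply List.ext_getElem (by simp [hlen])
      intro j h1 h2
      simp

-- Step-2 equivalence: subtract one from each part
def equivExcess (k m : ℕ) :
    {g : Fin k → ℕ // ∑ i, g i = k + 1 ∧ (Finset.univ.filter fun i => 1 ≤ g i).card = m}
    ≃ {f : Fin k → ℕ // (∀ i, 1 ≤ f i) ∧ ∑ i, f i = 2*k+1 ∧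
        (Finset.univ.filter fun i => 2 ≤ f i).card = m} where
  toFun g := ⟨fun i => g.1 i + 1, by
    obtain ⟨hs, hc⟩ := g.2
    refine ⟨fun i => le_add_self, ?_, ?_⟩
    · rw [Finset.sum_add_distrib, hs]
      simp [Finset.card_univ]
      ring
    · rw [show (Finset.univ.filter fun i => 2 ≤ g.1 i + 1) =
          (Finset.univ.filter fun i => 1 ≤ g.1 i) from
        Finset.filter_congr fun i _ => by omega]
      exact hc⟩
  invFun f := ⟨fun i => f.1 i - 1, by
    obtain ⟨h1, hs, hc⟩ := f.2
    have h2 : ∑ i, (f.1 i - 1 + 1) = 2*k+1 := by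
      rw [Finset.sum_congr rfl fun i _ => (by have := h1 i; omega : f.1 i - 1 + 1 = f.1 i)]
      exact hs
    rw [Finset.sum_add_distrib] at h2
    simp only [Finset.sum_const, Finset.card_univ, Fintype.card_fin, smul_eq_mul, mul_one] at h2
    constructor
    · show ∑ i : Fin k, (f.1 i - 1) = k + 1
      omega
    · rw [show (Finset.univ.filter fun i => 1 ≤ f.1 i - 1) =
          (Finset.univ.filter fun i => 2 ≤ f.1 i) from
        Finset.filter_congr fun i _ => by omega]
      exact hc⟩
  left_inv g := by
    apply Subtype.ext; funext i; simp
  right_inv f := by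
    apply Subtype.ext; funext i
    have := f.2.1 i
    simp only []
    omega

lemma orderIsoOfFin_congr {α : Type*} [LinearOrder α] {A B : Finset α} (hAB : A = B) {m : ℕ}
    (hA : A.card = m) (hB : B.card = m) (j : Fin m) :
    (A.orderIsoOfFin hA j : α) = (B.orderIsoOfFin hB j : α) := by subst hAB; rfl

noncomputable def equivSplit (k m : ℕ) :
    ({A : Finset (Fin k) // A.card = m} × {h : Fin m → ℕ // ∑ j, h j = k + 1 - m})
    ≃ {g : Fin k → ℕ // ∑ i, g i = k + 1 ∧ (Finset.univ.filter fun i => 1 ≤ g i).card = m} where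
  toFun p := by
    obtain ⟨⟨A, hA⟩, ⟨h, hh⟩⟩ := p
    have hmk : m ≤ k := by
      have := Finset.card_le_univ A
      simpa [hA] using this
    refine ⟨fun i => if hi : i ∈ A then h ((A.orderIsoOfFin hA).symm ⟨i, hi⟩) + 1 else 0, ?_, ?_⟩
    · have h0 : ∀ i ∈ Finset.univ \ A,
          (if hi : i ∈ A then h ((A.orderIsoOfFin hA).symm ⟨i, hi⟩) + 1 else 0) = 0 := by
        intro i hi
        rw [dif_neg (Finset.mem_sdiff.mp hi).2]
      rw [← Finset.sum_subset (Finset.subset_univ A) (fun i _ hi => dif_neg hi)]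
      rw [← Finset.sum_coe_sort A]
      have e1 : (∑ a : {x // x ∈ A}, if hi : (a : Fin k) ∈ A then
            h ((A.orderIsoOfFin hA).symm ⟨a, hi⟩) + 1 else 0)
          = ∑ a : {x // x ∈ A}, (h ((A.orderIsoOfFin hA).symm a) + 1) :=
        Fintype.sum_congr _ _ (fun a => by rw [dif_pos a.2])
      have e2 : ∑ a : {x // x ∈ A}, (h ((A.orderIsoOfFin hA).symm a) + 1)
          = ∑ j : Fin m, (h j + 1) :=
        (Fintype.sum_equiv (A.orderIsoOfFin hA).toEquiv _ _ (fun j => by simp)).symm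
      rw [e1, e2, Finset.sum_add_distrib, hh]
      simp only [Finset.sum_const, Finset.card_univ, Fintype.card_fin, smul_eq_mul, mul_one]
      omega
    · rw [show (Finset.univ.filter fun i =>
          1 ≤ (if hi : i ∈ A then h ((A.orderIsoOfFin hA).symm ⟨i, hi⟩) + 1 else 0)) = A from ?_]
      · exact hA
      · ext i
        simp only [Finset.mem_filter, Finset.mem_univ, true_and]
        constructor
        · intro hi
          by_contra hna
          rw [dif_neg hna] at hi
          omega
        · intro hi
          rw [dif_pos hi]
          omega
  invFun g := by
    obtain ⟨g, hs, hc⟩ := g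
    refine ⟨⟨Finset.univ.filter fun i => 1 ≤ g i, hc⟩,
      ⟨fun j => g (((Finset.univ.filter fun i => 1 ≤ g i).orderIsoOfFin hc) j) - 1, ?_⟩⟩
    have hmem : ∀ j : Fin m, 1 ≤ g (((Finset.univ.filter fun i => 1 ≤ g i).orderIsoOfFin hc) j) :=
      fun j => (Finset.mem_filter.mp (((Finset.univ.filter fun i => 1 ≤ g i).orderIsoOfFin hc) j).2).2
    have key : ∑ j : Fin m, g (((Finset.univ.filter fun i => 1 ≤ g i).orderIsoOfFin hc) j) = k + 1 := by
      rw [← hs]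
      rw [← Finset.sum_subset (Finset.subset_univ (Finset.univ.filter fun i => 1 ≤ g i))
        (fun i _ hi => by simpa using (by simpa using hi : ¬ 1 ≤ g i))]
      rw [← Finset.sum_coe_sort (Finset.univ.filter fun i => 1 ≤ g i)]
      exact Fintype.sum_equiv ((Finset.univ.filter fun i => 1 ≤ g i).orderIsoOfFin hc).toEquiv _ _
        (fun j => rfl)
    have h2 : ∑ j : Fin m, (g (((Finset.univ.filter fun i => 1 ≤ g i).orderIsoOfFin hc) j) - 1 + 1)
        = k + 1 := by
      rw [Finset.sum_congr rfl fun j _ => (by have := hmem j; omega :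
        g (((Finset.univ.filter fun i => 1 ≤ g i).orderIsoOfFin hc) j) - 1 + 1
          = g (((Finset.univ.filter fun i => 1 ≤ g i).orderIsoOfFin hc) j))]
      exact key
    rw [Finset.sum_add_distrib] at h2
    simp only [Finset.sum_const, Finset.card_univ, Fintype.card_fin, smul_eq_mul, mul_one] at h2
    show ∑ j : Fin m,
      (g (((Finset.univ.filter fun i => 1 ≤ g i).orderIsoOfFin hc) j) - 1) = k + 1 - m
    omega
  left_inv p := by
    obtain ⟨⟨A, hA⟩, ⟨h, hh⟩⟩ := p
    have hfil : (Finset.univ.filter fun i =>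
        1 ≤ (if hi : i ∈ A then h ((A.orderIsoOfFin hA).symm ⟨i, hi⟩) + 1 else 0)) = A := by
      ext i
      simp only [Finset.mem_filter, Finset.mem_univ, true_and]
      constructor
      · intro hi
        by_contra hna
        rw [dif_neg hna] at hi
        omega
      · intro hi
        rw [dif_pos hi]
        omega
    refine Prod.ext (Subtype.ext hfil) (Subtype.ext (funext fun j => ?_))
    dsimp only
    have main : ∀ (B : Finset (Fin k)) (hB : B.card = m), B = A →
        (if hi : ((B.orderIsoOfFin hB) j : Fin k) ∈ A then
          h ((A.orderIsoOfFin hA).symm ⟨((B.orderIsoOfFin hB) j : Fin k), hi⟩) + 1 else 0) - 1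
          = h j := by
      intro B hB hBA
      subst hBA
      rw [Subsingleton.elim hB hA, dif_pos ((B.orderIsoOfFin hA) j).2]
      simp only [Nat.add_sub_cancel]
      congr 1
      rw [OrderIso.symm_apply_eq]
    exact main _ _ hfil
  right_inv g := by
    obtain ⟨g, hs, hc⟩ := g
    apply Subtype.ext
    funext i
    simp only []
    by_cases hi : i ∈ (Finset.univ.filter fun i => 1 ≤ g i)
    · rw [dif_pos hi]
      have h1 : 1 ≤ g i := (Finset.mem_filter.mp hi).2
      rw [show ((Finset.univ.filter fun i => 1 ≤ g i).orderIsoOfFin hc)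
          (((Finset.univ.filter fun i => 1 ≤ g i).orderIsoOfFin hc).symm ⟨i, hi⟩) = ⟨i, hi⟩ from
        OrderIso.apply_symm_apply _ _]
      show g i - 1 + 1 = g i
      omega
    · rw [dif_neg hi]
      have : ¬ 1 ≤ g i := by simpa using hi
      omega

lemma aux_rotate_mul {α : Type*} {l : List α} {a : ℕ} (ha : l.rotate a = l) :
    ∀ t, l.rotate (a * t) = l
  | 0 => by simp
  | t + 1 => by
      rw [Nat.mul_succ, ← List.rotate_rotate, aux_rotate_mul ha t, ha]

lemma aux_rotate_mod_of {α : Type*} {l : List α} {a b : ℕ} (ha : l.rotate a = l)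
    (hb : l.rotate b = l) : l.rotate (b % a) = l := by
  have h : l.rotate (a * (b / a) + b % a) = l := by
    rw [Nat.div_add_mod b a]
    exact hb
  rw [← List.rotate_rotate, aux_rotate_mul ha (b/a)] at h
  exact h

lemma aux_rotate_gcd {α : Type*} {l : List α} : ∀ a b, l.rotate a = l → l.rotate b = l →
    l.rotate (Nat.gcd a b) = l := fun a => Nat.strong_induction_on a
  (fun a ih => by
    match a with
    | 0 => intro b _ hb; rwa [Nat.gcd_zero_left]
    | a + 1 =>
        intro b ha hb
        rw [Nat.gcd_rec]
        exact ih (b % (a+1)) (Nat.mod_lt _ (Nat.succ_pos a)) (a+1)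
          (aux_rotate_mod_of ha hb) ha)

lemma aux_sum_blocks (g : ℕ) : ∀ q (l : List ℕ), l.rotate g = l → l.length = g * q →
    l.sum = q * (l.take g).sum
  | 0, l, _, hlen => by
      have : l = [] := List.length_eq_zero_iff.mp (by omega)
      simp [this]
  | q + 1, l, hrot, hlen => by
      have hg : g ≤ l.length := by nlinarith [hlen]
      set x := l.take g with hx
      set y := l.drop g with hy
      have hxy : x ++ y = l := List.take_append_drop g l
      have hyx : y ++ x = l := by
        rw [List.rotate_eq_drop_append_take hg] at hrot; exact hrot
      have hlx : x.length = g := by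
        rw [hx, List.length_take]; omega
      have hly : y.length = g * q := by
        rw [hy, List.length_drop, hlen, Nat.mul_succ]; omega
      have hcomm : x ++ y = y ++ x := by rw [hxy, hyx]
      rcases Nat.eq_zero_or_pos q with hq | hq
      · subst hq
        have hynil : y = [] := List.length_eq_zero_iff.mp (by omega)
        rw [← hxy, hynil, List.append_nil]; ring
      · have hgy : g ≤ y.length := by nlinarith [hly]
        have hty : y.take g = x := by
          have h1 : (y ++ x).take g = y.take g := List.take_append_of_le_length hgy
          have h2 : (x ++ y).take g = x := by
            rw [List.take_append_of_le_length (le_of_eq hlx.symm), ← hlx, List.take_length]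
          rw [← hcomm, h2] at h1; exact h1.symm
        set d := y.drop g with hd
        have hyd : x ++ d = y := by rw [← hty]; exact List.take_append_drop g y
        have hdx : d ++ x = x ++ d := by
          have := hcomm
          rw [← hyd] at this
          have h3 : x ++ (x ++ d) = x ++ (d ++ x) := by
            rw [this]; rw [List.append_assoc]
          exact (List.append_cancel_left h3).symm
        have hrot_y : y.rotate g = y := by
          rw [List.rotate_eq_drop_append_take hgy, ← hd, hty, hdx, hyd]
        have ih := aux_sum_blocks g q y hrot_y hly
        rw [← hxy, List.sum_append, ih, hty, hx]
        ring

lemma aux_period {k d : ℕ} {l : List ℕ} (hl : l.length = k) (hs : l.sum = 2*k+1)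
    (hrot : l.rotate d = l) : k ∣ d := by
  have hrk : l.rotate k = l := by rw [← hl]; exact l.rotate_length
  have hg := aux_rotate_gcd d k hrot hrk
  set g := Nat.gcd d k with hgdef
  have hgk : g ∣ k := Nat.gcd_dvd_right d k
  obtain ⟨q, hq⟩ := hgk
  have hsum := aux_sum_blocks g q l hg (by rw [hl, hq])
  rw [hs] at hsum
  have hq1 : q ∣ 2*k+1 := Dvd.intro _ hsum.symm
  have hq2 : q ∣ k := ⟨g, by rw [hq, Nat.mul_comm]⟩
  have hco : Nat.Coprime k (2*k+1) := by
    rw [show 2*k+1 = 1 + 2*k by ring]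
    exact (Nat.coprime_add_mul_right_right k 1 2).mpr (Nat.coprime_one_right k)
  have hq3 : q ∣ 1 := hco ▸ Nat.dvd_gcd hq2 hq1
  have hq4 : q = 1 := Nat.dvd_one.mp hq3
  have hkg : k = g := by rw [hq, hq4, Nat.mul_one]
  rw [hkg]
  exact Nat.gcd_dvd_left d k

lemma aux_rotate_mem {n k m : ℕ} {μ : List ℕ}
    (h : IsCompositionOf n k μ ∧ μ.countP (fun x => 2 ≤ x) = m) (i : ℕ) :
    IsCompositionOf n k (μ.rotate i) ∧ (μ.rotate i).countP (fun x => 2 ≤ x) = m := by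
  obtain ⟨⟨h1, h2, h3⟩, h4⟩ := h
  have hp : List.Perm (μ.rotate i) μ := μ.rotate_perm i
  exact ⟨⟨by rw [hp.length_eq, h1], fun x hx => h2 x (hp.mem_iff.mp hx),
    by rw [hp.sum_eq, h3]⟩, by rw [hp.countP_eq, h4]⟩

lemma aux_card_quotient (k m : ℕ) (hk : 1 ≤ k) :
    Nat.card {μ : List ℕ // IsCompositionOf (2*k+1) k μ ∧ μ.countP (fun x => 2 ≤ x) = m}
    = cyclicCompCount (2*k+1) k m * k := by
  set s := Setoid.comap
    (Subtype.val :
      {μ : List ℕ // IsCompositionOf (2*k+1) k μ ∧ μ.countP (fun x => 2 ≤ x) = m} → List ℕ)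
    (List.IsRotated.setoid ℕ) with hs
  have hbij : Function.Bijective (fun p : Quotient s × Fin k =>
      (⟨(p.1.out.val).rotate p.2.val, aux_rotate_mem p.1.out.2 p.2.val⟩ :
        {μ : List ℕ // IsCompositionOf (2*k+1) k μ ∧ μ.countP (fun x => 2 ≤ x) = m})) := by
    constructor
    · rintro ⟨q, i⟩ ⟨q', i'⟩ hEq
      have hv : (q.out.val).rotate i.val = (q'.out.val).rotate i'.val :=
        congrArg Subtype.val hEq
      have hqq : q = q' := by
        rw [← Quotient.out_eq q, ← Quotient.out_eq q']
        apply Quotient.sound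
        have t1 : q.out.val ~r (q.out.val).rotate i.val := ⟨i.val, rfl⟩
        have t2 : (q'.out.val).rotate i'.val ~r q'.out.val := List.IsRotated.symm ⟨i'.val, rfl⟩
        rw [hv] at t1
        exact (Setoid.comap_rel _ _ _ _).mpr (t1.trans t2)
      subst hqq
      have hlen : (q.out.val).length = k := q.out.2.1.1
      have hsum : (q.out.val).sum = 2*k+1 := q.out.2.1.2.2
      have key : ∀ a b : Fin k, a.val ≤ b.val →
          (q.out.val).rotate a.val = (q.out.val).rotate b.val → a = b := by
        intro a b hab hrot
        have h1 : ((q.out.val).rotate (b.val - a.val)).rotate a.val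
            = (q.out.val).rotate a.val := by
          rw [List.rotate_rotate, Nat.sub_add_cancel hab, hrot]
        have h2 : (q.out.val).rotate (b.val - a.val) = q.out.val :=
          List.rotate_injective a.val h1
        have h3 : k ∣ b.val - a.val := aux_period hlen hsum h2
        have h4 : b.val - a.val = 0 := Nat.eq_zero_of_dvd_of_lt h3 (by omega) |>.symm ▸ rfl
        exact Fin.ext (by omega)
      rcases Nat.le_total i.val i'.val with h | h
      · exact Prod.ext rfl (key i i' h hv)
      · exact Prod.ext rfl ((key i' i h hv.symm).symm)
    · intro μ
      have hout : Quotient.mk s (Quotient.mk s μ).out = Quotient.mk s μ := Quotient.out_eq _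
      have hrel := Quotient.exact hout
      obtain ⟨n, hn⟩ := (Setoid.comap_rel _ _ _ _).mp hrel
      have hlen : (((Quotient.mk s μ).out).val).length = k := ((Quotient.mk s μ).out).2.1.1
      refine ⟨⟨Quotient.mk s μ, ⟨n % k, Nat.mod_lt _ hk⟩⟩, Subtype.ext ?_⟩
      show (((Quotient.mk s μ).out).val).rotate (n % k) = μ.val
      rw [show n % k = n % (((Quotient.mk s μ).out).val).length by rw [hlen],
        List.rotate_mod, hn]
  have hthis := Nat.card_congr (Equiv.ofBijective _ hbij)
  rw [Nat.card_prod] at hthis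
  have hcc : cyclicCompCount (2*k+1) k m = Nat.card (Quotient s) := by rw [cyclicCompCount, hs]
  rw [hcc, ← hthis, Nat.card_eq_fintype_card (α := Fin k), Fintype.card_fin]

lemma aux_card_comps (k m : ℕ) :
    Nat.card {μ : List ℕ // IsCompositionOf (2*k+1) k μ ∧ μ.countP (fun x => 2 ≤ x) = m}
    = k.choose m * Nat.multichoose m (k + 1 - m) := by
  rw [← Nat.card_congr ((equivSplit k m).trans ((equivExcess k m).trans
    (equivTuple (2*k+1) k m)))]
  rw [Nat.card_prod]
  congr 1
  · rw [Nat.card_eq_fintype_card, Fintype.card_finset_len, Fintype.card_fin]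
  · exact aux_card_sumFiber m (k+1-m)

theorem stmt5 (k m : ℕ) (hk : 1 ≤ k) :
    cyclicCompCount (2 * k + 1) k m = narayana k m := by
  have hmain : cyclicCompCount (2*k+1) k m * k = k.choose m * Nat.multichoose m (k + 1 - m) := by
    rw [← aux_card_quotient k m hk, aux_card_comps]
  rcases Nat.eq_zero_or_pos m with hm | hm
  · subst hm
    have h0 : Nat.multichoose 0 (k + 1 - 0) = 0 := by
      rw [show k + 1 - 0 = k + 1 from rfl]
      exact Nat.multichoose_zero_succ k
    rw [h0, Nat.mul_zero] at hmain
    have hcc0 : cyclicCompCount (2*k+1) k 0 = 0 := by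
      rcases Nat.mul_eq_zero.mp hmain with h | h
      · exact h
      · omega
    have hkne : k ≠ 0 := by omega
    rw [hcc0, narayana]
    simp [hkne]
  · have hm1 : m ≠ 0 := by omega
    have hform : k.choose m * Nat.multichoose m (k + 1 - m) = k.choose m * k.choose (m-1) := by
      rcases Nat.lt_or_ge k m with h | hmk
      · have hz : k.choose m = 0 := Nat.choose_eq_zero_of_lt h
        rw [hz, Nat.zero_mul, Nat.zero_mul]
      · congr 1
        rw [Nat.multichoose_eq]
        have h1 : m + (k + 1 - m) - 1 = k := by omega
        rw [h1]
        have h2 : k + 1 - m ≤ k := by omega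
        rw [← Nat.choose_symm h2]
        congr 1
        omega
    rw [hform] at hmain
    rw [narayana, if_neg hm1]
    exact (Nat.div_eq_of_eq_mul_left (by omega) hmain.symm).symm
end

section
/- For all integers k ≥ 1 and m ≥ 0, the number of cyclic compositions of 2k−1 into k parts having exactly m parts that are at least 2 (i.e., the number of equivalence classes under cyclic rotation of compositions of 2k−1 into k parts with exactly m parts ≥ 2) equals the Narayana number N_{k−1,m}. -/
/- ### Auxiliary material -/
lemma comm_sum_aux : ∀ (N : ℕ) (a b : List ℕ), a.length + b.length = N → a ++ b = b ++ a →
    a.sum * b.length = b.sum * a.length := by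
  intro N
  induction N using Nat.strong_induction_on with
  | _ N ih =>
    intro a b hab h
    rcases eq_or_ne a [] with rfl | ha
    · simp
    rcases eq_or_ne b [] with rfl | hb
    · simp
    have hal : 0 < a.length := List.length_pos_iff.mpr ha
    have hbl : 0 < b.length := List.length_pos_iff.mpr hb
    rcases le_or_gt a.length b.length with hle | hlt
    · have hbtake : b.take a.length = a := by
        have := congrArg (List.take a.length) h
        simpa [List.take_append_of_le_length hle, List.take_left] using this.symm
      set b' := b.drop a.length with hb'
      have hblen : b'.length = b.length - a.length := by rw [hb']; simp
      have hbb : b = a ++ b' := by rw [← hbtake, hb']; simp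
      have h2 : a ++ b' = b' ++ a := by
        have : a ++ (a ++ b') = (a ++ b') ++ a := by rw [← hbb, h]
        simpa [List.append_assoc] using this
      have := ih (a.length + b'.length) (by omega) a b' rfl h2
      rw [hbb]
      simp only [List.sum_append, List.length_append]
      nlinarith [this]
    · have hatake : a.take b.length = b := by
        have := congrArg (List.take b.length) h
        simpa [List.take_append_of_le_length hlt.le, List.take_left] using this
      set a' := a.drop b.length with ha'
      have halen : a'.length = a.length - b.length := by rw [ha']; simp
      have haa : a = b ++ a' := by rw [← hatake, ha']; simp
      have h2 : b ++ a' = a' ++ b := by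
        have : b ++ (b ++ a') = (b ++ a') ++ b := by rw [← haa, h.symm]
        simpa [List.append_assoc] using this
      have := ih (b.length + a'.length) (by omega) b a' rfl h2
      rw [haa]
      simp only [List.sum_append, List.length_append]
      nlinarith [this]

lemma comm_sum (a b : List ℕ) (h : a ++ b = b ++ a) :
    a.sum * b.length = b.sum * a.length := comm_sum_aux _ a b rfl h

lemma rotate_eq_self_aperiodic {l : List ℕ} {i : ℕ}
    (hco : Nat.Coprime l.sum l.length) (hi : i < l.length) (h : l.rotate i = l) : i = 0 := by
  by_contra hne
  have hipos : 0 < i := Nat.pos_of_ne_zero hne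
  have hr : l.rotate i = l.drop i ++ l.take i := List.rotate_eq_drop_append_take hi.le
  have hcomm : l.take i ++ l.drop i = l.drop i ++ l.take i := by
    rw [← hr, h, List.take_append_drop]
  have hs := comm_sum _ _ hcomm
  have hlt : (l.take i).length = i := by simp [hi.le]
  have hld : (l.drop i).length = l.length - i := by simp
  have hsum : (l.take i).sum + (l.drop i).sum = l.sum := by
    rw [← List.sum_append, List.take_append_drop]
  -- (take).sum * (len - i) = (drop).sum * i  →  take.sum * len = l.sum * i
  obtain ⟨d, hd⟩ : ∃ d, l.length = i + d := ⟨l.length - i, by omega⟩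
  have key : (l.take i).sum * l.length = l.sum * i := by
    rw [hlt, hld, hd, Nat.add_sub_cancel_left] at hs
    rw [hd, ← hsum]
    ring_nf
    nlinarith [hs]
  have hdvd : l.length ∣ l.sum * i := ⟨(l.take i).sum, by linarith [key]⟩
  have : l.length ∣ i := (Nat.Coprime.dvd_of_dvd_mul_left (hco.symm) hdvd)
  exact absurd (Nat.le_of_dvd hipos this) (by omega)
lemma rotate_add_length (l : List ℕ) (a : ℕ) : l.rotate (l.length + a) = l.rotate a := by
  rw [← List.rotate_rotate, List.rotate_length]

section
variable (n k m : ℕ)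

abbrev CompT := {μ : List ℕ // IsCompositionOf n k μ ∧ μ.countP (fun x => 2 ≤ x) = m}

instance : Finite (CompT n k m) := by
  apply Finite.of_injective (fun t : CompT n k m =>
    (fun i : Fin k => (⟨t.val.get (Fin.cast t.prop.1.1.symm i), by
      have hmem : t.val.get (Fin.cast t.prop.1.1.symm i) ∈ t.val := by apply List.get_mem
      have h1 := List.single_le_sum (l := t.val) (by intro x _; exact Nat.zero_le x) _ hmem
      have h2 := t.prop.1.2.2
      omega⟩ : Fin (n+1))))
  intro t1 t2 h
  ext1
  apply List.ext_get (by rw [t1.prop.1.1, t2.prop.1.1])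
  intro i h1 h2
  have := congrFun h ⟨i, by rw [← t1.prop.1.1]; exact h1⟩
  simpa [Fin.ext_iff] using this

lemma rotate_mem_CompT (t : CompT n k m) (i : ℕ) :
    IsCompositionOf n k ((t.val).rotate i) ∧ List.countP (fun x => 2 ≤ x) ((t.val).rotate i) = m := by
  have hp : List.Perm (t.val.rotate i) t.val := List.rotate_perm t.val i
  obtain ⟨⟨hl, hpos, hs⟩, hc⟩ := t.prop
  exact ⟨⟨by rw [hp.length_eq, hl], fun x hx => hpos x (hp.mem_iff.mp hx), by rw [hp.sum_eq, hs]⟩,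
    by rw [hp.countP_eq, hc]⟩

lemma part1 (hk : 0 < k) (hco : Nat.Coprime n k) :
    Nat.card (Quotient (Setoid.comap (Subtype.val : CompT n k m → List ℕ)
      (List.IsRotated.setoid ℕ))) * k = Nat.card (CompT n k m) := by
  set r := Setoid.comap (Subtype.val : CompT n k m → List ℕ) (List.IsRotated.setoid ℕ) with hr
  haveI : Fintype (CompT n k m) := Fintype.ofFinite _
  haveI : Fintype (Quotient r) := Fintype.ofFinite _
  rw [Nat.card_eq_fintype_card, Nat.card_eq_fintype_card]
  classical
  have hcard : Fintype.card (CompT n k m) =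
      ∑ c : Quotient r, Fintype.card {t : CompT n k m // Quotient.mk r t = c} := by
    rw [← Fintype.card_sigma]
    exact (Fintype.card_congr (Equiv.sigmaFiberEquiv (Quotient.mk r))).symm
  have hfib : ∀ c : Quotient r, Fintype.card {t : CompT n k m // Quotient.mk r t = c} = k := by
    intro c
    obtain ⟨t₀, rfl⟩ := Quotient.exists_rep c
    have hlen : t₀.val.length = k := t₀.prop.1.1
    have hsum : t₀.val.sum = n := t₀.prop.1.2.2
    have hco' : Nat.Coprime t₀.val.sum t₀.val.length := by rw [hlen, hsum]; exact hco
    have e : Fin k ≃ {t : CompT n k m // Quotient.mk r t = Quotient.mk r t₀} := by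
      apply Equiv.ofBijective (fun i =>
        ⟨⟨t₀.val.rotate i, rotate_mem_CompT n k m t₀ i⟩,
          Quotient.sound (List.IsRotated.symm ⟨i, rfl⟩)⟩)
      constructor
      · intro i j hij
        have hij' : t₀.val.rotate i = t₀.val.rotate j := by
          simpa using congrArg (fun x => x.val.val) hij
        rcases le_or_gt (i : ℕ) j with hle | hlt
        · have key : t₀.val.rotate ((j : ℕ) - i) = t₀.val := by
            have h1 : (t₀.val.rotate j).rotate (k - i) = t₀.val.rotate ((j:ℕ) - i) := by
              rw [List.rotate_rotate,
                show (j : ℕ) + (k - i) = t₀.val.length + ((j:ℕ) - i) by rw [hlen]; omega,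
                rotate_add_length]
            have h2 : (t₀.val.rotate i).rotate (k - i) = t₀.val := by
              rw [List.rotate_rotate, show (i : ℕ) + (k - i) = t₀.val.length by rw [hlen]; omega,
                List.rotate_length]
            rw [← h1, ← hij', h2]
          have := rotate_eq_self_aperiodic hco' (by rw [hlen]; omega) key
          exact Fin.ext (by omega)
        · have key : t₀.val.rotate ((i : ℕ) - j) = t₀.val := by
            have h1 : (t₀.val.rotate i).rotate (k - j) = t₀.val.rotate ((i:ℕ) - j) := by
              rw [List.rotate_rotate,
                show (i : ℕ) + (k - j) = t₀.val.length + ((i:ℕ) - j) by rw [hlen]; omega,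
                rotate_add_length]
            have h2 : (t₀.val.rotate j).rotate (k - j) = t₀.val := by
              rw [List.rotate_rotate, show (j : ℕ) + (k - j) = t₀.val.length by rw [hlen]; omega,
                List.rotate_length]
            rw [← h1, hij', h2]
          have := rotate_eq_self_aperiodic hco' (by rw [hlen]; omega) key
          exact Fin.ext (by omega)
      · rintro ⟨t, ht⟩
        have hrot : (t₀.val).IsRotated t.val := (Quotient.exact ht).symm
        obtain ⟨nn, hnn⟩ := hrot
        refine ⟨⟨nn % k, Nat.mod_lt _ hk⟩, ?_⟩
        ext1
        ext1
        show t₀.val.rotate (nn % k) = t.val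
        have hmod : t₀.val.rotate (nn % t₀.val.length) = t₀.val.rotate nn := List.rotate_mod _ _
        rw [hlen] at hmod
        rw [hmod, hnn]
    rw [← Fintype.card_congr e, Fintype.card_fin]
  rw [hcard]
  simp [hfib, Finset.sum_const, Finset.card_univ, mul_comm]
end
lemma card_tuple_sum (m r : ℕ) :
    Nat.card {u : Fin m → ℕ // ∑ j, u j = r} = (m + r - 1).choose r := by
  classical
  have e : Sym (Fin m) r ≃ {u : Fin m → ℕ // ∑ j, u j = r} := by
    refine Equiv.subtypeEquiv (Multiset.toFinsupp.toEquiv.trans Finsupp.equivFunOnFinite)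
      fun s => ?_
    have hs : ∀ j, (Multiset.toFinsupp.toEquiv.trans Finsupp.equivFunOnFinite) s j = s.count j :=
      fun j => rfl
    simp only [hs]
    rw [show ∑ j, s.count j = Multiset.card s from
      Multiset.sum_count_eq_card (fun a _ => Finset.mem_univ a)]
  rw [← Nat.card_congr e, Nat.card_eq_fintype_card, Sym.card_sym_eq_multichoose,
    Nat.multichoose_eq, Fintype.card_fin]
lemma orderIsoOfFin_congr_s6 {α : Type*} [LinearOrder α] {s t : Finset α} (e : s = t) {m : ℕ}
    (hs : s.card = m) (ht : t.card = m) (j : Fin m) :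
    ((s.orderIsoOfFin hs j : s) : α) = (t.orderIsoOfFin ht j : α) := by subst e; rfl

variable (k m r : ℕ)

def E3 : {g : Fin k → ℕ // ∑ i, g i = r ∧ (Finset.univ.filter fun i => g i ≠ 0).card = m} ≃
    {s : Finset (Fin k) // s.card = m} × {h : Fin m → ℕ // (∀ j, h j ≠ 0) ∧ ∑ j, h j = r} where
  toFun g :=
    (⟨Finset.univ.filter fun i => g.val i ≠ 0, g.prop.2⟩,
     ⟨fun j => g.val ((Finset.univ.filter fun i => g.val i ≠ 0).orderIsoOfFin g.prop.2 j), by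
      constructor
      · intro j
        have := ((Finset.univ.filter fun i => g.val i ≠ 0).orderIsoOfFin g.prop.2 j).prop
        exact (Finset.mem_filter.mp this).2
      · show ∑ j : Fin m, (fun x : (Finset.univ.filter fun i => g.val i ≠ 0) => g.val x)
            (((Finset.univ.filter fun i => g.val i ≠ 0).orderIsoOfFin g.prop.2).toEquiv j) = r
        rw [Fintype.sum_equiv ((Finset.univ.filter fun i => g.val i ≠ 0).orderIsoOfFin
            g.prop.2).toEquiv _ (fun x => g.val x) (fun j => rfl), Finset.sum_coe_sort]
        exact (Finset.sum_subset (Finset.filter_subset _ _)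
          (fun x _ hx => by simpa using hx)).trans g.prop.1⟩)
  invFun p :=
    ⟨fun i => if hi : i ∈ p.1.val then
        p.2.val ((p.1.val.orderIsoOfFin p.1.prop).symm ⟨i, hi⟩) else 0, by
      refine ⟨?_, ?_⟩
      · rw [← Finset.sum_subset (Finset.subset_univ p.1.val)
          (by intro x _ hx; exact dif_neg hx), ← Finset.sum_coe_sort]
        rw [Fintype.sum_equiv ((p.1.val.orderIsoOfFin p.1.prop).toEquiv.symm) _ p.2.val
          (fun x => by rw [dif_pos x.prop, Subtype.coe_eta]; rfl)]
        exact p.2.prop.2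
      · have e : (Finset.univ.filter fun i => (fun i => if hi : i ∈ p.1.val then
            p.2.val ((p.1.val.orderIsoOfFin p.1.prop).symm ⟨i, hi⟩) else 0) i ≠ 0) = p.1.val := by
          ext i
          simp only [Finset.mem_filter, Finset.mem_univ, true_and]
          constructor
          · intro hi
            by_contra hmem
            exact hi (dif_neg hmem)
          · intro hi
            rw [dif_pos hi]
            exact p.2.prop.1 _
        rw [e]
        exact p.1.prop⟩
  left_inv g := by
    ext i
    simp only
    by_cases hi : i ∈ Finset.univ.filter fun j => g.val j ≠ 0
    · rw [dif_pos hi]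
      have : ((Finset.univ.filter fun j => g.val j ≠ 0).orderIsoOfFin g.prop.2)
          (((Finset.univ.filter fun j => g.val j ≠ 0).orderIsoOfFin g.prop.2).symm ⟨i, hi⟩)
          = ⟨i, hi⟩ := OrderIso.apply_symm_apply _ _
      rw [this]
    · rw [dif_neg hi]
      simp only [Finset.mem_filter, Finset.mem_univ, true_and, not_not] at hi
      exact hi.symm
  right_inv p := by
    obtain ⟨⟨s, hs⟩, h⟩ := p
    have e : (Finset.univ.filter fun i =>
        (if hi : i ∈ s then h.val ((s.orderIsoOfFin hs).symm ⟨i, hi⟩) else 0) ≠ 0) = s := by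
      ext i
      simp only [Finset.mem_filter, Finset.mem_univ, true_and]
      constructor
      · intro hi; by_contra hmem; exact hi (dif_neg hmem)
      · intro hi; rw [dif_pos hi]; exact h.prop.1 _
    refine Prod.ext (Subtype.ext e) (Subtype.ext ?_)
    funext j
    simp only
    have hcard : (Finset.univ.filter fun i =>
        (if hi : i ∈ s then h.val ((s.orderIsoOfFin hs).symm ⟨i, hi⟩) else 0) ≠ 0).card = m := by
      rw [e]; exact hs
    have hmem : ∀ j : Fin m, (((Finset.univ.filter fun i =>
        (if hi : i ∈ s then h.val ((s.orderIsoOfFin hs).symm ⟨i, hi⟩) else 0) ≠ 0).orderIsoOfFin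
          hcard j : Fin k)) ∈ s := by
      intro j
      have := orderIsoOfFin_congr_s6 e hcard hs j
      rw [this]
      exact (s.orderIsoOfFin hs j).prop
    rw [dif_pos (hmem j)]
    have h2 : (⟨_, hmem j⟩ : {x // x ∈ s}) = s.orderIsoOfFin hs j :=
      Subtype.ext (orderIsoOfFin_congr_s6 e hcard hs j)
    exact (congrArg (fun x => h.val ((s.orderIsoOfFin hs).symm x)) h2).trans
      (congrArg h.val (OrderIso.symm_apply_apply _ _))
lemma countP_ofFn {α : Type*} {k : ℕ} (f : Fin k → α) (p : α → Bool) :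
    (List.ofFn f).countP p = (Finset.univ.filter (fun i => p (f i) = true)).card := by
  classical
  rw [List.ofFn_eq_map, List.countP_map]
  simp [Finset.card_filter, Fin.univ_def, Finset.filter, List.countP_eq_length_filter,
    Multiset.filter_coe]
  rfl

lemma sum_get (μ : List ℕ) {k : ℕ} (hl : μ.length = k) :
    ∑ i : Fin k, μ.get (Fin.cast hl.symm i) = μ.sum := by
  subst hl
  conv_rhs => rw [← List.ofFn_get μ]
  rw [List.sum_ofFn]
  rfl

lemma countP_get (μ : List ℕ) {k : ℕ} (hl : μ.length = k) (p : ℕ → Prop) [DecidablePred p] :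
    (Finset.univ.filter fun i : Fin k => p (μ.get (Fin.cast hl.symm i))).card
      = μ.countP (fun x => decide (p x)) := by
  subst hl
  conv_rhs => rw [← List.ofFn_get μ]
  rw [countP_ofFn]
  congr 1
  apply Finset.filter_congr
  intro i _
  simp

variable (n k m : ℕ)

def E1 : {μ : List ℕ // IsCompositionOf n k μ ∧ μ.countP (fun x => 2 ≤ x) = m} ≃
    {f : Fin k → ℕ // (∀ i, 1 ≤ f i) ∧ ∑ i, f i = n ∧
      (Finset.univ.filter fun i => 2 ≤ f i).card = m} where
  toFun t := ⟨fun i => t.val.get (Fin.cast t.prop.1.1.symm i), by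
    obtain ⟨⟨hl, hpos, hs⟩, hc⟩ := t.prop
    refine ⟨fun i => hpos _ (t.val.get_mem _), ?_, ?_⟩
    · show ∑ i : Fin k, t.val.get (Fin.cast t.prop.1.1.symm i) = n
      rw [sum_get t.val t.prop.1.1]
      exact hs
    · show (Finset.univ.filter fun i : Fin k =>
        2 ≤ t.val.get (Fin.cast t.prop.1.1.symm i)).card = m
      rw [countP_get t.val t.prop.1.1 (fun x => 2 ≤ x)]
      exact hc⟩
  invFun f := ⟨List.ofFn f.val, by
    obtain ⟨hpos, hs, hc⟩ := f.prop
    refine ⟨⟨List.length_ofFn, ?_, by rw [List.sum_ofFn]; exact hs⟩, ?_⟩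
    · intro x hx
      rw [List.mem_ofFn] at hx
      obtain ⟨i, rfl⟩ := hx
      exact hpos i
    · rw [countP_ofFn]
      have efil : (Finset.univ.filter fun i => decide (2 ≤ f.val i) = true)
          = (Finset.univ.filter fun i => 2 ≤ f.val i) := by
        apply Finset.filter_congr
        intro i _
        simp
      rw [efil]
      exact hc⟩
  left_inv t := by
    ext1
    apply List.ext_get (by simp [t.prop.1.1])
    intro i h1 h2
    simp [List.get_ofFn]
  right_inv f := by
    ext1
    funext i
    simp [List.get_ofFn]

def E2 (hk : 1 ≤ k) : {f : Fin k → ℕ // (∀ i, 1 ≤ f i) ∧ ∑ i, f i = 2 * k - 1 ∧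
      (Finset.univ.filter fun i => 2 ≤ f i).card = m} ≃
    {g : Fin k → ℕ // ∑ i, g i = k - 1 ∧ (Finset.univ.filter fun i => g i ≠ 0).card = m} where
  toFun f := ⟨fun i => f.val i - 1, by
    obtain ⟨hpos, hs, hc⟩ := f.prop
    have h2 : ∑ i, f.val i = ∑ i, (f.val i - 1) + k := by
      rw [show ∑ i, f.val i = ∑ i, ((f.val i - 1) + 1) from
        Finset.sum_congr rfl (fun i _ => by have := hpos i; omega)]
      rw [Finset.sum_add_distrib]
      simp
    constructor
    · show ∑ i, (f.val i - 1) = k - 1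
      omega
    · show (Finset.univ.filter fun i => f.val i - 1 ≠ 0).card = m
      have efil : (Finset.univ.filter fun i => f.val i - 1 ≠ 0)
          = (Finset.univ.filter fun i => 2 ≤ f.val i) := by
        apply Finset.filter_congr
        intro i _
        have := hpos i
        try simp only [eq_iff_iff]
        omega
      rw [efil]
      exact hc⟩
  invFun g := ⟨fun i => g.val i + 1, by
    obtain ⟨hs, hc⟩ := g.prop
    have h2 : ∑ i, (g.val i + 1) = ∑ i, g.val i + k := by
      rw [Finset.sum_add_distrib]
      simp
    refine ⟨fun i => by show 1 ≤ g.val i + 1; omega, ?_, ?_⟩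
    · show ∑ i, (g.val i + 1) = 2 * k - 1
      omega
    · show (Finset.univ.filter fun i => 2 ≤ g.val i + 1).card = m
      have efil : (Finset.univ.filter fun i => 2 ≤ g.val i + 1)
          = (Finset.univ.filter fun i => g.val i ≠ 0) := by
        apply Finset.filter_congr
        intro i _
        try simp only [eq_iff_iff]
        omega
      rw [efil]
      exact hc⟩
  left_inv f := by
    ext1
    funext i
    have := f.prop.1 i
    simp only
    omega
  right_inv g := by
    ext1
    funext i
    simp only
    omega

def E4 (r : ℕ) : {h : Fin m → ℕ // (∀ j, h j ≠ 0) ∧ ∑ j, h j = r} ≃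
    {u : Fin m → ℕ // (∑ j, u j) + m = r} where
  toFun h := ⟨fun j => h.val j - 1, by
    obtain ⟨hpos, hs⟩ := h.prop
    have h2 : ∑ j, h.val j = ∑ j, (h.val j - 1) + m := by
      rw [show ∑ j, h.val j = ∑ j, ((h.val j - 1) + 1) from
        Finset.sum_congr rfl (fun j _ => by have := hpos j; omega)]
      rw [Finset.sum_add_distrib]
      simp
    show (∑ j, (h.val j - 1)) + m = r
    omega⟩
  invFun u := ⟨fun j => u.val j + 1, by
    have hs := u.prop
    have h2 : ∑ j, (u.val j + 1) = ∑ j, u.val j + m := by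
      rw [Finset.sum_add_distrib]
      simp
    refine ⟨fun j => by show u.val j + 1 ≠ 0; omega, ?_⟩
    show ∑ j, (u.val j + 1) = r
    omega⟩
  left_inv h := by
    ext1; funext j
    have := h.prop.1 j
    simp only
    omega
  right_inv u := by
    ext1; funext j
    simp only
    omega
  

lemma narayana_succ_mul (n m : ℕ) (hn : 1 ≤ n) (hm : 1 ≤ m) (hmn : m ≤ n) :
    narayana n m * (n + 1) = (n + 1).choose m * (n - 1).choose (m - 1) := by
  have e1 : n - 1 + 1 = n := by omega
  have e2 : m - 1 + 1 = m := by omega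
  have h1 : n * (n - 1).choose (m - 1) = n.choose m * m := by
    have := Nat.add_one_mul_choose_eq (n - 1) (m - 1)
    simpa [Nat.succ_eq_add_one, e1, e2] using this
  have h2 : (n + 1) * n.choose (m - 1) = (n + 1).choose m * m := by
    have := Nat.add_one_mul_choose_eq n (m - 1)
    simpa [Nat.succ_eq_add_one, e2] using this
  have h3 : n.choose m * m = n.choose (m - 1) * (n - (m - 1)) := by
    have := Nat.choose_succ_right_eq n (m - 1)
    rwa [e2] at this
  set P := n.choose m * n.choose (m - 1) with hP
  have hd1 : n ∣ m * P := ⟨(n - 1).choose (m - 1) * n.choose (m - 1), by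
    rw [hP, show m * (n.choose m * n.choose (m-1)) = (n.choose m * m) * n.choose (m-1) from by
      ring, ← h1]; ring⟩
  have hd2 : n ∣ (n + 1 - m) * P := ⟨n.choose m * (n - 1).choose (m - 1), by
    rw [hP, show n + 1 - m = n - (m - 1) from by omega,
      show (n - (m-1)) * (n.choose m * n.choose (m-1))
        = n.choose m * (n.choose (m-1) * (n - (m-1))) from by ring, ← h3, show
      n.choose m * (n.choose m * m) = (n.choose m * m) * n.choose m from by ring, ← h1]; ring⟩
  have hd3 : n ∣ (n + 1) * P := by
    have := Nat.dvd_add hd1 hd2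
    rwa [← add_mul, show m + (n + 1 - m) = n + 1 from by omega] at this
  have hd : n ∣ P := by
    have := Nat.dvd_sub hd3 (Dvd.intro P rfl)
    rwa [show (n + 1) * P - n * P = P from by ring_nf; omega] at this
  obtain ⟨N, hN⟩ := hd
  have hnar : narayana n m = N := by
    rw [narayana, if_neg (by omega), ← hP, hN, Nat.mul_div_cancel_left _ (by omega)]
  rw [hnar]
  apply Nat.eq_of_mul_eq_mul_left (show 0 < n by omega)
  calc n * (N * (n + 1)) = P * (n + 1) := by rw [hN]; ring
    _ = n.choose m * ((n + 1) * n.choose (m - 1)) := by rw [hP]; ring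
    _ = n.choose m * ((n + 1).choose m * m) := by rw [h2]
    _ = (n + 1).choose m * (n.choose m * m) := by ring
    _ = (n + 1).choose m * (n * (n - 1).choose (m - 1)) := by rw [← h1]
    _ = n * ((n + 1).choose m * (n - 1).choose (m - 1)) := by ring

lemma card_compT (k m : ℕ) (hk : 1 ≤ k) :
    Nat.card (CompT (2 * k - 1) k m)
      = k.choose m * Nat.card {u : Fin m → ℕ // (∑ j, u j) + m = k - 1} := by
  rw [Nat.card_congr ((E1 (2 * k - 1) k m).trans ((E2 k m hk).trans ((E3 k m (k - 1)).trans
    (Equiv.prodCongr (Equiv.refl _) (E4 m (k - 1))))))]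
  rw [Nat.card_prod]
  congr 1
  rw [Nat.card_eq_fintype_card, Fintype.card_finset_len, Fintype.card_fin]

lemma card_U (k m : ℕ) (hm : 1 ≤ m) (hmk : m ≤ k - 1) :
    Nat.card {u : Fin m → ℕ // (∑ j, u j) + m = k - 1} = (k - 2).choose (m - 1) := by
  rw [Nat.card_congr (Equiv.subtypeEquivRight (fun u => by
    show (∑ j, u j) + m = k - 1 ↔ ∑ j, u j = k - 1 - m
    omega))]
  rw [card_tuple_sum m (k - 1 - m)]
  rw [show m + (k - 1 - m) - 1 = k - 2 from by omega,
    show k - 1 - m = (k - 2) - (m - 1) from by omega,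
    Nat.choose_symm (by omega)]

lemma card_U_zero (k m : ℕ) (hmk : k - 1 < m) :
    Nat.card {u : Fin m → ℕ // (∑ j, u j) + m = k - 1} = 0 := by
  haveI : IsEmpty {u : Fin m → ℕ // (∑ j, u j) + m = k - 1} :=
    ⟨fun u => by have := u.prop; omega⟩
  exact Nat.card_of_isEmpty

theorem stmt6 (k m : ℕ) (hk : 1 ≤ k) :
    cyclicCompCount (2 * k - 1) k m = narayana (k - 1) m := by
  have hco : Nat.Coprime (2 * k - 1) k := by
    have h2 : Nat.gcd (2 * k - 1) k ∣ k := Nat.gcd_dvd_right _ _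
    have h3 : Nat.gcd (2 * k - 1) k ∣ 1 := by
      have := Nat.dvd_sub (h2.mul_left 2) (Nat.gcd_dvd_left (2 * k - 1) k)
      rwa [show 2 * k - (2 * k - 1) = 1 from by omega] at this
    exact Nat.dvd_one.mp h3
  have hp1 := part1 (2 * k - 1) k m (by omega) hco
  have hQ : cyclicCompCount (2 * k - 1) k m * k = Nat.card (CompT (2 * k - 1) k m) := hp1
  rcases Nat.lt_or_ge m 1 with hm | hm
  · -- m = 0
    have hm0 : m = 0 := by omega
    subst hm0
    rcases eq_or_lt_of_le hk with hk1 | hk2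
    · -- k = 1
      have hk1 : k = 1 := hk1.symm
      subst hk1
      haveI : Unique (CompT (2 * 1 - 1) 1 0) := by
        refine ⟨⟨⟨[1], ⟨rfl, by simp, rfl⟩, by simp⟩⟩, ?_⟩
        rintro ⟨μ, ⟨hl, hpos, hs⟩, hc⟩
        obtain ⟨a, rfl⟩ := List.length_eq_one_iff.mp hl
        simp only [List.sum_cons, List.sum_nil, add_zero] at hs
        subst hs
        rfl
      have h1 : Nat.card (CompT (2 * 1 - 1) 1 0) = 1 := Nat.card_unique
      rw [h1, mul_one] at hQ
      rw [hQ]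
      simp [narayana]
    · -- k ≥ 2
      haveI : IsEmpty (CompT (2 * k - 1) k 0) := by
        refine ⟨fun t => ?_⟩
        obtain ⟨⟨hl, hpos, hs⟩, hc⟩ := t.prop
        have hall : ∀ x ∈ t.val, ¬ (2 ≤ x) := by
          intro x hx
          have := List.countP_eq_zero.mp hc x hx
          simpa using this
        have hone : ∀ x ∈ t.val, x = 1 := fun x hx =>
          le_antisymm (by have := hall x hx; omega) (hpos x hx)
        have hrep : t.val = List.replicate t.val.length 1 :=
          List.eq_replicate_length.mpr hone
        rw [hrep] at hs
        simp [List.sum_replicate] at hs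
        omega
      have h0 : Nat.card (CompT (2 * k - 1) k 0) = 0 := Nat.card_of_isEmpty
      rw [h0, Nat.mul_eq_zero] at hQ
      have : cyclicCompCount (2 * k - 1) k 0 = 0 := by omega
      rw [this, narayana, if_pos rfl, if_neg (by omega)]
  · -- m ≥ 1
    rcases eq_or_lt_of_le hk with hk1 | hk2
    · -- k = 1
      have hk1 : k = 1 := hk1.symm
      subst hk1
      haveI : IsEmpty (CompT (2 * 1 - 1) 1 m) := by
        refine ⟨fun t => ?_⟩
        obtain ⟨⟨hl, hpos, hs⟩, hc⟩ := t.prop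
        obtain ⟨a, ha⟩ := List.length_eq_one_iff.mp hl
        rw [ha] at hs
        simp only [List.sum_cons, List.sum_nil, add_zero] at hs
        rw [ha, hs] at hc
        simp at hc
        omega
      have h0 : Nat.card (CompT (2 * 1 - 1) 1 m) = 0 := Nat.card_of_isEmpty
      rw [h0, Nat.mul_eq_zero] at hQ
      have h1 : cyclicCompCount (2 * 1 - 1) 1 m = 0 := by omega
      rw [h1, narayana, if_neg (by omega)]
      simp [Nat.choose_eq_zero_of_lt (by omega : 0 < m)]
    · -- k ≥ 2
      have hcnt := card_compT k m hk
      rcases Nat.lt_or_ge (k - 1) m with hmk | hmk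
      · -- m > k - 1 : both sides zero
        rw [card_U_zero k m hmk, mul_zero] at hcnt
        rw [hcnt, Nat.mul_eq_zero] at hQ
        have h1 : cyclicCompCount (2 * k - 1) k m = 0 := by omega
        rw [h1, narayana, if_neg (by omega)]
        rw [Nat.choose_eq_zero_of_lt (by omega : k - 1 < m)]
        simp
      · -- 1 ≤ m ≤ k - 1
        rw [card_U k m hm hmk] at hcnt
        have harith := narayana_succ_mul (k - 1) m (by omega) hm hmk
        rw [show k - 1 + 1 = k from by omega, show k - 1 - 1 = k - 2 from by omega] at harith
        apply Nat.eq_of_mul_eq_mul_right (show 0 < k from by omega)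
        rw [hQ, hcnt, harith]
end

section
/- Let n, k ≥ 1 and let μ be a composition of n into k parts. Then k times the number of Dyck words of semilength n whose rise composition is a cyclic rotation of μ equals ord[μ]·binom(n,k−1), where ord[μ] is the number of distinct cyclic rotations of μ. -/
/-- Number of occurrences of `p` as a (consecutive) factor of `w`. -/
def countFactor (p w : List Bool) : ℕ :=
  (List.range w.length).countP (fun i => p.isPrefixOf (w.drop i))

/-- `w` is a Dyck word of semilength `n` (`true` = U, `false` = D). -/
def IsDyckWord (n : ℕ) (w : List Bool) : Prop :=
  w.length = 2 * n ∧ w.count true = n ∧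
    ∀ i, (w.take i).count false ≤ (w.take i).count true

/-- `ordList μ` : the number of distinct cyclic rotations of `μ`. -/
noncomputable def ordList (μ : List ℕ) : ℕ := Nat.card {l : List ℕ // μ.IsRotated l}

/-- The rise composition of a Dyck word: the list of lengths of the maximal runs of
`U`s (`true`s), from left to right. -/
def riseComposition (w : List Bool) : List ℕ :=
  ((w.splitOn false).map List.length).filter (fun x => 0 < x)
namespace Stmt7Aux



/-- path stays ≥ 0 starting from height `h` -/
def Ok : ℕ → List Bool → Prop
  | _, [] => True
  | h, (true :: t) => Ok (h+1) t
  | h, (false :: t) => 1 ≤ h ∧ Ok (h-1) t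

@[simp] lemma ok_nil (h : ℕ) : Ok h [] := trivial
@[simp] lemma ok_cons_true {h t} : Ok h (true :: t) ↔ Ok (h+1) t := Iff.rfl
@[simp] lemma ok_cons_false {h t} : Ok h (false :: t) ↔ 1 ≤ h ∧ Ok (h-1) t := Iff.rfl

lemma ok_iff_take (w : List Bool) (h : ℕ) :
    Ok h w ↔ ∀ i, ((w.take i).count false ≤ (w.take i).count true + h) := by
  induction w generalizing h with
  | nil => simp
  | cons a t ih =>
    cases a with
    | false =>
      rw [ok_cons_false, ih]
      constructor
      · rintro ⟨h1, h2⟩ i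
        cases i with
        | zero => simp
        | succ i =>
          have := h2 i
          simp [List.take_succ_cons, List.count_cons] at this ⊢
          omega
      · intro H
        have h1 : 1 ≤ h := by
          have := H 1
          simpa using this
        refine ⟨h1, fun i => ?_⟩
        have := H (i+1)
        simp [List.take_succ_cons, List.count_cons] at this ⊢
        omega
    | true =>
      rw [ok_cons_true, ih]
      constructor
      · intro H i
        cases i with
        | zero => simp
        | succ i =>
          have := H i
          simp [List.take_succ_cons, List.count_cons] at this ⊢
          omega
      · intro H i
        have := H (i+1)
        simp [List.take_succ_cons, List.count_cons] at this ⊢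
        omega

/-- the word `U^{a_1} D^{b_1} ⋯` -/
def wrd : List ℕ → List ℕ → List Bool
  | x :: a, y :: b => List.replicate x true ++ (List.replicate y false ++ wrd a b)
  | _, _ => []

@[simp] lemma wrd_nil_left (b : List ℕ) : wrd [] b = [] := by cases b <;> rfl
@[simp] lemma wrd_nil_right (a : List ℕ) : wrd a [] = [] := by cases a <;> rfl
@[simp] lemma wrd_cons (x y : ℕ) (a b : List ℕ) :
    wrd (x :: a) (y :: b) = List.replicate x true ++ (List.replicate y false ++ wrd a b) := rfl

lemma count_wrd_true : ∀ a b : List ℕ, (wrd a b).count true = (a.zipWith (fun x _ => x) b).sum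
  | [], b => by simp
  | a :: _, [] => by simp
  | x :: a, y :: b => by
    simp [List.count_append, List.count_replicate, count_wrd_true a b]

lemma count_wrd_false : ∀ a b : List ℕ, (wrd a b).count false = (a.zipWith (fun _ y => y) b).sum
  | [], b => by simp
  | a :: _, [] => by simp
  | x :: a, y :: b => by
    simp [List.count_append, List.count_replicate, count_wrd_false a b]

lemma zipWith_fst_eq (a : List ℕ) : ∀ b : List ℕ, a.length = b.length →
    (a.zipWith (fun x _ => x) b) = a := by
  induction a with
  | nil => intro b h; simp
  | cons x a ih =>
    intro b h
    cases b with
    | nil => simp at h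
    | cons y b => simp only [List.zipWith_cons_cons, List.cons.injEq, true_and]
                  exact ih b (by simpa using h)

lemma zipWith_snd_eq (a : List ℕ) : ∀ b : List ℕ, a.length = b.length →
    (a.zipWith (fun _ y => y) b) = b := by
  induction a with
  | nil => intro b h; cases b; · simp
           · simp at h
  | cons x a ih =>
    intro b h
    cases b with
    | nil => simp at h
    | cons y b => simp only [List.zipWith_cons_cons, List.cons.injEq, true_and]
                  exact ih b (by simpa using h)

lemma count_wrd_true' (a b : List ℕ) (h : a.length = b.length) :
    (wrd a b).count true = a.sum := by rw [count_wrd_true, zipWith_fst_eq a b h]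

lemma count_wrd_false' (a b : List ℕ) (h : a.length = b.length) :
    (wrd a b).count false = b.sum := by rw [count_wrd_false, zipWith_snd_eq a b h]

lemma count_true_add_count_false (w : List Bool) : w.count true + w.count false = w.length := by
  induction w with
  | nil => rfl
  | cons a t ih => cases a <;> simp [List.count_cons] <;> omega

lemma length_wrd (a b : List ℕ) (h : a.length = b.length) :
    (wrd a b).length = a.sum + b.sum := by
  rw [← count_true_add_count_false, count_wrd_true' a b h, count_wrd_false' a b h]

lemma ok_replicate_true (x : ℕ) : ∀ (h : ℕ) (t : List Bool),
    Ok h (List.replicate x true ++ t) ↔ Ok (h + x) t := by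
  induction x with
  | zero => simp
  | succ x ih =>
    intro h t
    rw [List.replicate_succ, List.cons_append, ok_cons_true, ih,
      show h + 1 + x = h + (x+1) from by omega]

lemma ok_replicate_false (y : ℕ) : ∀ (h : ℕ) (t : List Bool),
    Ok h (List.replicate y false ++ t) ↔ y ≤ h ∧ Ok (h - y) t := by
  induction y with
  | zero => simp
  | succ y ih =>
    intro h t
    rw [List.replicate_succ, List.cons_append, ok_cons_false, ih]
    constructor
    · rintro ⟨h1, h2, h3⟩
      exact ⟨by omega, by rwa [show h - 1 - y = h - (y+1) from by omega] at h3⟩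
    · rintro ⟨h1, h2⟩
      exact ⟨by omega, by omega, by rwa [show h - (y+1) = h - 1 - y from by omega] at h2⟩

/-- block-level dominance -/
def Dom : ℕ → List ℕ → List ℕ → Prop
  | _, [], [] => True
  | h, x :: a, y :: b => y ≤ h + x ∧ Dom (h + x - y) a b
  | _, _, _ => False

lemma ok_wrd : ∀ (a b : List ℕ), a.length = b.length → ∀ h, (Ok h (wrd a b) ↔ Dom h a b)
  | [], [], _, h => by simp [Dom]
  | [], _ :: _, hl, h => by simp at hl
  | _ :: _, [], hl, h => by simp at hl
  | x :: a, y :: b, hl, h => by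
    rw [wrd_cons, ok_replicate_true, ok_replicate_false,
      ok_wrd a b (by simpa using hl) (h + x - y)]
    rfl

lemma dom_iff_take : ∀ (a b : List ℕ), a.length = b.length → ∀ h,
    (Dom h a b ↔ ∀ i ≤ a.length, (b.take i).sum ≤ h + (a.take i).sum)
  | [], [], _, h => by simp [Dom]
  | [], _ :: _, hl, h => by simp at hl
  | _ :: _, [], hl, h => by simp at hl
  | x :: a, y :: b, hl, h => by
    show (y ≤ h + x ∧ Dom (h + x - y) a b) ↔ _
    rw [dom_iff_take a b (by simpa using hl)]
    constructor
    · rintro ⟨h1, h2⟩ i hi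
      cases i with
      | zero => simp
      | succ j =>
        have := h2 j (by simpa using hi)
        simp only [List.take_succ_cons, List.sum_cons]
        omega
    · intro H
      have h1 : y ≤ h + x := by
        have := H 1 (by simp)
        simpa using this
      refine ⟨h1, fun j hj => ?_⟩
      have := H (j+1) (by simpa using hj)
      simp only [List.take_succ_cons, List.sum_cons] at this
      omega




def fallComposition (w : List Bool) : List ℕ :=
  ((w.splitOn true).map List.length).filter (fun x => 0 < x)

lemma splitOn_cons_self (x : Bool) (t : List Bool) :
    (x :: t).splitOn x = [] :: t.splitOn x := by
  simp [List.splitOn, List.splitOnP_cons]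

lemma splitOn_cons_ne (x a : Bool) (t : List Bool) (h : a ≠ x) :
    (a :: t).splitOn x = (t.splitOn x).modifyHead (List.cons a) := by
  simp [List.splitOn, List.splitOnP_cons, h]

lemma rise_nil : riseComposition [] = [] := rfl
lemma fall_nil : fallComposition [] = [] := rfl

lemma rise_cons_false (t : List Bool) : riseComposition (false :: t) = riseComposition t := by
  simp [riseComposition, splitOn_cons_self]

lemma fall_cons_true (t : List Bool) : fallComposition (true :: t) = fallComposition t := by
  simp [fallComposition, splitOn_cons_self]

lemma rise_replicate_false (y : ℕ) (t : List Bool) :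
    riseComposition (List.replicate y false ++ t) = riseComposition t := by
  induction y with
  | zero => simp
  | succ y ih => rw [List.replicate_succ, List.cons_append, rise_cons_false, ih]

lemma fall_replicate_true (x : ℕ) (t : List Bool) :
    fallComposition (List.replicate x true ++ t) = fallComposition t := by
  induction x with
  | zero => simp
  | succ x ih => rw [List.replicate_succ, List.cons_append, fall_cons_true, ih]

lemma splitOn_block (c : Bool) (x : ℕ) (t : List Bool) :
    (List.replicate x (!c) ++ c :: t).splitOn c = List.replicate x (!c) :: t.splitOn c := by
  induction x with
  | zero => simpa using splitOn_cons_self c t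
  | succ x ih =>
    rw [List.replicate_succ, List.cons_append, splitOn_cons_ne c (!c) _ (by simp), ih]
    rfl

lemma rise_block (x : ℕ) (hx : 1 ≤ x) (t : List Bool) :
    riseComposition (List.replicate x true ++ false :: t) = x :: riseComposition t := by
  have := splitOn_block false x t
  simp only [Bool.not_false] at this
  simp [riseComposition, this, List.filter_cons]
  omega

lemma fall_block (y : ℕ) (hy : 1 ≤ y) (t : List Bool) :
    fallComposition (List.replicate y false ++ true :: t) = y :: fallComposition t := by
  have := splitOn_block true y t
  simp only [Bool.not_true] at this
  simp [fallComposition, this, List.filter_cons]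
  omega

lemma splitOn_replicate_ne (c : Bool) (y : ℕ) :
    (List.replicate y (!c)).splitOn c = [List.replicate y (!c)] := by
  induction y with
  | zero => rfl
  | succ y ih =>
    rw [List.replicate_succ, splitOn_cons_ne c (!c) _ (by simp), ih]
    rfl

lemma fall_replicate_false (y : ℕ) (hy : 1 ≤ y) :
    fallComposition (List.replicate y false) = [y] := by
  have := splitOn_replicate_ne true y
  simp only [Bool.not_true] at this
  simp [fallComposition, this, List.filter_cons]
  omega

lemma rise_fall_wrd : ∀ (a b : List ℕ), a.length = b.length →
    (∀ x ∈ a, 1 ≤ x) → (∀ y ∈ b, 1 ≤ y) →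
    riseComposition (wrd a b) = a ∧ fallComposition (wrd a b) = b
  | [], [], _, _, _ => by simp [rise_nil, fall_nil]
  | [], _ :: _, hl, _, _ => by simp at hl
  | _ :: _, [], hl, _, _ => by simp at hl
  | x :: a, y :: b, hl, ha, hb => by
    have hx : 1 ≤ x := ha x (by simp)
    have hy : 1 ≤ y := hb y (by simp)
    have hl' : a.length = b.length := by simpa using hl
    obtain ⟨IH1, IH2⟩ := rise_fall_wrd a b hl' (fun z hz => ha z (by simp [hz]))
      (fun z hz => hb z (by simp [hz]))
    constructor
    · obtain ⟨y', rfl⟩ : ∃ m, y = m + 1 := ⟨y - 1, by omega⟩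
      rw [wrd_cons, List.replicate_succ, List.cons_append,
        show List.replicate x true ++ (false :: (List.replicate y' false ++ wrd a b))
          = List.replicate x true ++ false :: (List.replicate y' false ++ wrd a b) from rfl,
        rise_block x hx, rise_replicate_false, IH1]
    · rw [wrd_cons, fall_replicate_true]
      cases a with
      | nil =>
        have : b = [] := by cases b; · rfl
                            · simp at hl'
        subst this
        simpa using fall_replicate_false y hy
      | cons x' a' =>
        cases b with
        | nil => simp at hl'
        | cons y' b' =>
          have hx' : 1 ≤ x' := ha x' (by simp)
          obtain ⟨x'', rfl⟩ : ∃ m, x' = m + 1 := ⟨x' - 1, by omega⟩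
          rw [wrd_cons, fall_replicate_true] at IH2
          rw [wrd_cons, List.replicate_succ, List.cons_append, fall_block y hy,
            fall_replicate_true, IH2]




lemma ok_zero_iff (w : List Bool) :
    Ok 0 w ↔ ∀ i, (w.take i).count false ≤ (w.take i).count true := by
  rw [ok_iff_take]; simp

lemma getLast?_append_right (l l2 : List Bool) (h : l2 ≠ []) :
    (l ++ l2).getLast? = l2.getLast? := by
  rw [List.getLast?_append]
  cases l2 with
  | nil => simp at h
  | cons a t => simp [List.getLast?]

lemma head?_dropWhile_true (l : List Bool) (h : l.dropWhile (fun b => b) ≠ []) :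
    (l.dropWhile (fun b => b)).head? = some false := by
  have hh := List.head_dropWhile_not (fun b => b) h
  rw [List.head?_eq_head h]
  simpa using hh

lemma head?_dropWhile_false (l : List Bool) (h : l.dropWhile (fun b => !b) ≠ []) :
    (l.dropWhile (fun b => !b)).head? = some true := by
  have hh := List.head_dropWhile_not (fun b => !b) h
  rw [List.head?_eq_head h]
  simpa using hh

lemma decomp : ∀ (N : ℕ) (w : List Bool), w.length ≤ N →
    w.head? = some true → w.getLast? = some false →
    ∃ a b : List ℕ, a.length = b.length ∧ (∀ x ∈ a, 1 ≤ x) ∧ (∀ y ∈ b, 1 ≤ y) ∧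
      w = wrd a b := by
  intro N
  induction N with
  | zero =>
    intro w hw h1 _
    cases w with
    | nil => simp at h1
    | cons a t => simp at hw
  | succ N ih =>
    intro w hw h1 h2
    obtain ⟨u, hu⟩ : ∃ u, w.takeWhile (fun b => b) = u := ⟨_, rfl⟩
    obtain ⟨w1, hw1⟩ : ∃ w1, w.dropWhile (fun b => b) = w1 := ⟨_, rfl⟩
    have hurep : u = List.replicate u.length true := by
      refine List.eq_replicate_length.mpr (fun b hb => ?_)
      rw [← hu] at hb
      simpa using List.mem_takeWhile_imp hb
    have huw : u ++ w1 = w := by rw [← hu, ← hw1]; exact List.takeWhile_append_dropWhile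
    obtain ⟨t0, rfl⟩ : ∃ t, w = true :: t := by
      cases w with
      | nil => simp at h1
      | cons a t =>
        have : a = true := by simpa using h1
        exact ⟨t, by rw [this]⟩
    have hx1 : 1 ≤ u.length := by
      rw [← hu, List.takeWhile_cons_of_pos (by simp)]
      simp
    have hw1ne : w1 ≠ [] := by
      intro hcon
      rw [hcon, List.append_nil] at huw
      rw [← huw, hurep] at h2
      obtain ⟨m, hm⟩ : ∃ m, u.length = m + 1 := ⟨u.length - 1, by omega⟩
      rw [hm, List.replicate_succ', List.getLast?_concat] at h2
      simp at h2
    obtain ⟨c1, t1, hw1e⟩ : ∃ c t, w1 = c :: t := by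
      cases w1 with
      | nil => exact absurd rfl hw1ne
      | cons c t => exact ⟨c, t, rfl⟩
    have hc1 : c1 = false := by
      have hh := head?_dropWhile_true (true :: t0) (by rw [hw1]; exact hw1ne)
      rw [hw1, hw1e] at hh
      simpa using hh
    subst hc1
    obtain ⟨u2, hu2⟩ : ∃ u2, w1.takeWhile (fun b => !b) = u2 := ⟨_, rfl⟩
    obtain ⟨w2, hw2⟩ : ∃ w2, w1.dropWhile (fun b => !b) = w2 := ⟨_, rfl⟩
    have hu2rep : u2 = List.replicate u2.length false := by
      refine List.eq_replicate_length.mpr (fun b hb => ?_)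
      rw [← hu2] at hb
      simpa using List.mem_takeWhile_imp hb
    have hu2w : u2 ++ w2 = w1 := by rw [← hu2, ← hw2]; exact List.takeWhile_append_dropWhile
    have hy1 : 1 ≤ u2.length := by
      rw [← hu2, hw1e, List.takeWhile_cons_of_pos (by simp)]
      simp
    have hwdec : true :: t0 = List.replicate u.length true ++ (List.replicate u2.length false ++ w2) := by
      rw [← hurep, ← hu2rep, hu2w, huw]
    cases hw2e : w2 with
    | nil =>
      refine ⟨[u.length], [u2.length], rfl, by simpa using hx1, by simpa using hy1, ?_⟩
      rw [hwdec, hw2e]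
      simp [wrd]
    | cons c t2 =>
      rw [hw2e] at hwdec hw2
      have hchead : (c :: t2).head? = some true := by
        have hh := head?_dropWhile_false w1 (by rw [hw2]; simp)
        rw [hw2] at hh
        simpa using hh
      have hclast : (c :: t2).getLast? = some false := by
        rw [← getLast?_append_right (List.replicate u.length true ++
          List.replicate u2.length false) (c :: t2) (by simp), List.append_assoc, ← hwdec]
        exact h2
      have hlen : (c :: t2).length ≤ N := by
        have hlenw := congrArg List.length hwdec
        simp only [List.length_cons, List.length_append, List.length_replicate] at hlenw hw ⊢
        omega
      obtain ⟨a, b, hab, ha, hb, hw2d⟩ := ih (c :: t2) hlen hchead hclast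
      refine ⟨u.length :: a, u2.length :: b, by simpa using hab, ?_, ?_, ?_⟩
      · intro z hz
        rcases List.mem_cons.mp hz with rfl | hz
        · exact hx1
        · exact ha z hz
      · intro z hz
        rcases List.mem_cons.mp hz with rfl | hz
        · exact hy1
        · exact hb z hz
      · rw [hwdec, hw2d, wrd_cons]

lemma dyck_head (n : ℕ) (w : List Bool) (hn : 1 ≤ n) (hd : IsDyckWord n w) :
    w.head? = some true := by
  obtain ⟨hlen, hcnt, hpre⟩ := hd
  cases w with
  | nil => simp at hlen; omega
  | cons a t =>
    cases a with
    | true => rfl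
    | false =>
      have := hpre 1
      simp at this

lemma dyck_last (n : ℕ) (w : List Bool) (hn : 1 ≤ n) (hd : IsDyckWord n w) :
    w.getLast? = some false := by
  obtain ⟨hlen, hcnt, hpre⟩ := hd
  have hcf : w.count false = n := by
    have := count_true_add_count_false w
    omega
  rcases List.eq_nil_or_concat w with rfl | ⟨u, a, rfl⟩
  · simp at hlen; omega
  · rw [List.concat_eq_append] at hlen hcnt hcf ⊢
    simp only [List.concat_eq_append] at hpre
    cases a with
    | false => exact List.getLast?_concat
    | true =>
      exfalso
      have htu : (u ++ [true]).take u.length = u := List.take_left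
      have := hpre u.length
      rw [htu] at this
      simp [List.count_append, List.count_cons] at hcf hcnt
      omega

lemma dyck_decomp (n : ℕ) (w : List Bool) (hn : 1 ≤ n) (h : IsDyckWord n w) :
    ∃ a b : List ℕ, a.length = b.length ∧ (∀ x ∈ a, 1 ≤ x) ∧ (∀ y ∈ b, 1 ≤ y) ∧
      w = wrd a b :=
  decomp w.length w le_rfl (dyck_head n w hn h) (dyck_last n w hn h)

def CondA (n : ℕ) (μ : List ℕ) (p : List ℕ × List ℕ) : Prop :=
  p.1.length = p.2.length ∧ (∀ x ∈ p.1, 1 ≤ x) ∧ (∀ y ∈ p.2, 1 ≤ y) ∧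
    p.1.sum = n ∧ p.2.sum = n ∧ Dom 0 p.1 p.2 ∧ p.1.IsRotated μ

lemma condA_of_dyck (n : ℕ) (μ : List ℕ) (w : List Bool) (hn : 1 ≤ n)
    (h : IsDyckWord n w ∧ (riseComposition w).IsRotated μ) :
    CondA n μ (riseComposition w, fallComposition w) := by
  obtain ⟨hd, hrot⟩ := h
  obtain ⟨a, b, hab, ha, hb, rfl⟩ := dyck_decomp n w hn hd
  obtain ⟨hr, hf⟩ := rise_fall_wrd a b hab ha hb
  obtain ⟨hlen, hcnt, hpre⟩ := hd
  have hsa : a.sum = n := by rw [← count_wrd_true' a b hab]; exact hcnt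
  have hsb : b.sum = n := by
    have := count_true_add_count_false (wrd a b)
    rw [count_wrd_true' a b hab, count_wrd_false' a b hab, hlen] at this
    omega
  have hdom : Dom 0 a b := by
    rw [← ok_wrd a b hab 0]
    exact (ok_zero_iff _).mpr hpre
  rw [hr, hf]
  exact ⟨hab, ha, hb, hsa, hsb, hdom, by rwa [hr] at hrot⟩

lemma wrd_rise_fall (n : ℕ) (w : List Bool) (hn : 1 ≤ n) (hd : IsDyckWord n w) :
    wrd (riseComposition w) (fallComposition w) = w := by
  obtain ⟨a, b, hab, ha, hb, rfl⟩ := dyck_decomp n w hn hd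
  obtain ⟨hr, hf⟩ := rise_fall_wrd a b hab ha hb
  rw [hr, hf]

lemma dyck_of_condA (n : ℕ) (μ : List ℕ) (p : List ℕ × List ℕ) (h : CondA n μ p) :
    IsDyckWord n (wrd p.1 p.2) ∧ (riseComposition (wrd p.1 p.2)).IsRotated μ := by
  obtain ⟨hab, ha, hb, hsa, hsb, hdom, hrot⟩ := h
  obtain ⟨hr, hf⟩ := rise_fall_wrd p.1 p.2 hab ha hb
  refine ⟨⟨?_, ?_, ?_⟩, ?_⟩
  · rw [length_wrd p.1 p.2 hab, hsa, hsb]; omega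
  · rw [count_wrd_true' p.1 p.2 hab, hsa]
  · exact (ok_zero_iff _).mp ((ok_wrd p.1 p.2 hab 0).mpr hdom)
  · rwa [hr]

noncomputable def equiv1 (n : ℕ) (μ : List ℕ) (hn : 1 ≤ n) :
    {w : List Bool // IsDyckWord n w ∧ (riseComposition w).IsRotated μ} ≃
    {p : List ℕ × List ℕ // CondA n μ p} where
  toFun x := ⟨(riseComposition x.1, fallComposition x.1), condA_of_dyck n μ x.1 hn x.2⟩
  invFun p := ⟨wrd p.1.1 p.1.2, dyck_of_condA n μ p.1 p.2⟩
  left_inv x := Subtype.ext (wrd_rise_fall n x.1 hn x.2.1)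
  right_inv p := by
    obtain ⟨⟨a, b⟩, hp⟩ := p
    obtain ⟨hr, hf⟩ := rise_fall_wrd a b hp.1 hp.2.1 hp.2.2.1
    exact Subtype.ext (Prod.ext hr hf)




/-- prefix sums -/
def pf (c : List ℤ) (i : ℕ) : ℤ := (c.take i).sum

lemma pf_zero (c : List ℤ) : pf c 0 = 0 := rfl

lemma pf_length (c : List ℤ) : pf c c.length = c.sum := by
  simp [pf]

lemma pf_add (c : List ℤ) (r i : ℕ) :
    pf c (r + i) = pf c r + ((c.drop r).take i).sum := by
  rw [pf, List.take_add, List.sum_append]; rfl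

lemma sum_drop (c : List ℤ) (r : ℕ) : (c.drop r).sum = c.sum - pf c r := by
  have : c.take r ++ c.drop r = c := List.take_append_drop r c
  have := congrArg List.sum this
  rw [List.sum_append] at this
  rw [pf]
  omega

lemma rot_take_sum (c : List ℤ) (r i : ℕ) (hr : r ≤ c.length) (hi : i ≤ c.length) :
    ((c.rotate r).take i).sum =
      if r + i ≤ c.length then pf c (r + i) - pf c r
      else pf c (r + i - c.length) - pf c r + c.sum := by
  rw [List.rotate_eq_drop_append_take hr, List.take_append]
  split_ifs with hcase
  · have h1 : (c.drop r).take i = (c.drop r).take i := rfl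
    have hdl : (c.drop r).length = c.length - r := by simp
    have h2 : i - (c.drop r).length = 0 := by omega
    rw [h2, List.take_zero, List.append_nil]
    have := pf_add c r i
    omega
  · have hdl : (c.drop r).length = c.length - r := by simp
    have h1 : (c.drop r).take i = c.drop r := List.take_of_length_le (by omega)
    have h2 : (c.take r).take (i - (c.drop r).length) = c.take (i - (c.length - r)) := by
      rw [List.take_take, hdl]
      congr 1
      omega
    rw [h1, h2, List.sum_append, sum_drop]
    have h3 : i - (c.length - r) = r + i - c.length := by omega
    rw [h3]
    simp only [pf]
    omega

/-- rotation `r` keeps all proper prefix sums nonnegative -/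
def Good (c : List ℤ) (r : ℕ) : Prop := ∀ i < c.length, 0 ≤ ((c.rotate r).take i).sum

lemma good_zero_iff (c : List ℤ) : Good c 0 ↔ ∀ j < c.length, 0 ≤ pf c j := by
  unfold Good
  rw [List.rotate_zero]
  rfl

lemma good_iff (c : List ℤ) (hc : c.sum = -1) (r : ℕ) (hr : r < c.length) (hr1 : 1 ≤ r) :
    Good c r ↔ (∀ j, r ≤ j → j ≤ c.length → pf c r ≤ pf c j) ∧
      (∀ m, 1 ≤ m → m < r → pf c r + 1 ≤ pf c m) := by
  constructor
  · intro H
    constructor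
    · intro j hj1 hj2
      have hi : j - r < c.length := by omega
      have := H (j - r) hi
      rw [rot_take_sum c r (j - r) (by omega) (by omega), if_pos (by omega),
        show r + (j - r) = j from by omega] at this
      omega
    · intro m hm1 hm2
      have hi : c.length - r + m < c.length := by omega
      have := H (c.length - r + m) hi
      have heq : r + (c.length - r + m) - c.length = m := by omega
      rw [rot_take_sum c r (c.length - r + m) (by omega) (by omega),
        if_neg (by omega), heq, hc] at this
      omega
  · rintro ⟨H1, H2⟩ i hi
    rw [rot_take_sum c r i (by omega) (by omega)]
    split_ifs with hcase
    · have := H1 (r + i) (by omega) hcase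
      simp only [pf] at this ⊢
      omega
    · have := H2 (r + i - c.length) (by omega) (by omega)
      rw [hc]
      simp only [pf] at this ⊢
      omega

theorem cycle_exists_unique (c : List ℤ) (hc : c.sum = -1) :
    ∃! r, r < c.length ∧ Good c r := by
  classical
  have hk : 1 ≤ c.length := by
    rcases c with _ | ⟨a, t⟩
    · simp at hc
    · simp
  have hkval : pf c c.length = -1 := by rw [pf_length, hc]
  have hex : ∃ j, j ≤ c.length ∧ ∀ i ≤ c.length, pf c j ≤ pf c i := by
    obtain ⟨j, hj, hmin⟩ := (Finset.range (c.length + 1)).exists_min_image (pf c)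
      ⟨0, by simp⟩
    have hj' := Finset.mem_range.mp hj
    refine ⟨j, by omega, fun i hi => ?_⟩
    exact hmin i (Finset.mem_range.mpr (by omega))
  set r0 := Nat.find hex with hr0def
  obtain ⟨hr0le, hr0min⟩ := Nat.find_spec hex
  rw [← hr0def] at hr0le hr0min
  have hstrict : ∀ j < r0, pf c r0 < pf c j := by
    intro j hj
    have hnot := Nat.find_min hex hj
    push_neg at hnot
    obtain ⟨i, hi, hlt⟩ := hnot (by omega)
    exact lt_of_le_of_lt (hr0min i hi) hlt
  have hr0pos : 1 ≤ r0 := by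
    by_contra hcon
    have h0 : pf c r0 ≤ pf c c.length := hr0min c.length le_rfl
    rw [show r0 = 0 from by omega, pf_zero] at h0
    omega
  refine ⟨if r0 = c.length then 0 else r0, ⟨?_, ?_⟩, ?_⟩
  · split_ifs <;> omega
  · split_ifs with hcase
    · rw [good_zero_iff]
      intro j hj
      have := hstrict j (by omega)
      rw [hcase, hkval] at this
      omega
    · rw [good_iff c hc r0 (by omega) hr0pos]
      constructor
      · intro j _ hj2
        exact hr0min j hj2
      · intro m _ hm2
        have := hstrict m hm2
        omega
  · rintro s ⟨hs, hgood⟩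
    rcases Nat.eq_zero_or_pos s with rfl | hspos
    · rw [good_zero_iff] at hgood
      have : r0 = c.length := by
        by_contra hcon
        have h1 := hgood r0 (by omega)
        have h2 := hr0min c.length le_rfl
        omega
      simp [this]
    · rw [good_iff c hc s hs hspos] at hgood
      obtain ⟨G1, G2⟩ := hgood
      have hPs : s ≤ c.length ∧ ∀ i ≤ c.length, pf c s ≤ pf c i := by
        refine ⟨by omega, fun i hi => ?_⟩
        rcases lt_or_ge i s with hlt | hge
        · rcases Nat.eq_zero_or_pos i with rfl | hipos
          · have := G1 c.length (by omega) le_rfl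
            rw [pf_zero, hkval] at *
            omega
          · have := G2 i hipos hlt
            omega
        · exact G1 i hge hi
      have hr0s : r0 ≤ s := by rw [hr0def]; exact Nat.find_le hPs
      have : r0 = s := by
        by_contra hcon
        have h1 := G2 r0 hr0pos (by omega)
        have h2 := hr0min s (by omega)
        omega
      rw [← this]
      have : r0 ≠ c.length := by omega
      simp [this]




def lastD (l : List ℕ) : ℕ := l.getLast?.getD 0
def dec (l : List ℕ) : List ℕ := l.dropLast ++ [lastD l - 1]
def inc (l : List ℕ) : List ℕ := l.dropLast ++ [lastD l + 1]

lemma lastD_concat (u : List ℕ) (v : ℕ) : lastD (u ++ [v]) = v := by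
  rw [lastD, List.getLast?_concat]; rfl

lemma split_last (l : List ℕ) (h : l ≠ []) : l.dropLast ++ [lastD l] = l := by
  conv_rhs => rw [← List.dropLast_append_getLast h]
  rw [lastD, List.getLast?_eq_getLast h]; rfl

lemma lastD_mem (l : List ℕ) (h : l ≠ []) : lastD l ∈ l := by
  rw [lastD, List.getLast?_eq_getLast h]
  simpa using List.getLast_mem h

lemma length_pos_ne (l : List ℕ) (h : l ≠ []) : 1 ≤ l.length :=
  List.length_pos_iff.mpr h

lemma length_dec (l : List ℕ) (h : l ≠ []) : (dec l).length = l.length := by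
  have := length_pos_ne l h
  simp [dec]
  omega

lemma length_inc (l : List ℕ) (h : l ≠ []) : (inc l).length = l.length := by
  have := length_pos_ne l h
  simp [inc]
  omega

lemma sum_dropLast_add (l : List ℕ) (h : l ≠ []) : l.dropLast.sum + lastD l = l.sum := by
  have := congrArg List.sum (split_last l h)
  simpa using this

lemma sum_inc (l : List ℕ) (h : l ≠ []) : (inc l).sum = l.sum + 1 := by
  have := sum_dropLast_add l h
  simp [inc]
  omega

lemma sum_dec (l : List ℕ) (h : l ≠ []) (h1 : 1 ≤ lastD l) : (dec l).sum + 1 = l.sum := by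
  have := sum_dropLast_add l h
  simp [dec]
  omega

lemma dec_inc (l : List ℕ) (h : l ≠ []) : dec (inc l) = l := by
  rw [inc, dec, List.dropLast_concat, lastD_concat]
  simpa using split_last l h

lemma inc_dec (l : List ℕ) (h : l ≠ []) (h1 : 1 ≤ lastD l) : inc (dec l) = l := by
  rw [dec, inc, List.dropLast_concat, lastD_concat]
  rw [show lastD l - 1 + 1 = lastD l from by omega]
  exact split_last l h

lemma take_dropLast_eq (l : List ℕ) (i : ℕ) (h : i < l.length) :
    l.dropLast.take i = l.take i := by
  rw [List.dropLast_eq_take, List.take_take]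
  congr 1
  omega

lemma take_dec (l : List ℕ) (i : ℕ) (h : i < l.length) : (dec l).take i = l.take i := by
  rw [dec, List.take_append_of_le_length (by simp; omega), take_dropLast_eq l i h]

lemma take_inc (l : List ℕ) (i : ℕ) (h : i < l.length) : (inc l).take i = l.take i := by
  rw [inc, List.take_append_of_le_length (by simp; omega), take_dropLast_eq l i h]

lemma mem_inc (l : List ℕ) (h : l ≠ []) (hp : ∀ x ∈ l, 1 ≤ x) : ∀ x ∈ inc l, 1 ≤ x := by
  intro x hx
  rw [inc] at hx
  rcases List.mem_append.mp hx with hx | hx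
  · exact hp x (List.mem_of_mem_dropLast hx)
  · simp at hx
    omega

lemma sum_rotate (l : List ℕ) (n : ℕ) : (l.rotate n).sum = l.sum :=
  (List.IsRotated.perm ⟨n, rfl⟩).sum_eq.symm

lemma dropLast_eq_take_pred (l : List ℕ) : l.dropLast = l.take (l.length - 1) :=
  List.dropLast_eq_take

/-- list of differences -/
def dif (a d : List ℕ) : List ℤ := List.zipWith (fun (x y : ℕ) => (x : ℤ) - (y : ℤ)) a d

lemma length_dif (a d : List ℕ) (h : a.length = d.length) : (dif a d).length = a.length := by
  simp [dif, h]

lemma sum_dif : ∀ (a d : List ℕ), a.length = d.length →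
    (dif a d).sum = (a.sum : ℤ) - d.sum
  | [], [], _ => by simp [dif]
  | [], _ :: _, h => by simp at h
  | _ :: _, [], h => by simp at h
  | x :: a, y :: d, h => by
    have := sum_dif a d (by simpa using h)
    simp only [dif, List.zipWith_cons_cons, List.sum_cons] at this ⊢
    omega

lemma take_dif (a d : List ℕ) (i : ℕ) :
    (dif a d).take i = dif (a.take i) (d.take i) := List.take_zipWith

lemma drop_dif (a d : List ℕ) (i : ℕ) :
    (dif a d).drop i = dif (a.drop i) (d.drop i) := List.drop_zipWith

lemma rotate_dif (a d : List ℕ) (h : a.length = d.length) (r : ℕ) (hr : r ≤ a.length) :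
    (dif a d).rotate r = dif (a.rotate r) (d.rotate r) := by
  rw [List.rotate_eq_drop_append_take (by rw [length_dif a d h]; exact hr),
    List.rotate_eq_drop_append_take hr, List.rotate_eq_drop_append_take (by omega),
    take_dif, drop_dif]
  rw [dif, dif, dif, List.zipWith_append (by simp [h])]

lemma good_iff_doms (a d : List ℕ) (h : a.length = d.length) (r : ℕ) (hr : r ≤ a.length) :
    Good (dif a d) r ↔
      ∀ i < a.length, ((d.rotate r).take i).sum ≤ ((a.rotate r).take i).sum := by
  unfold Good
  rw [length_dif a d h]
  refine forall_congr' fun i => imp_congr_right fun hi => ?_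
  rw [rotate_dif a d h r hr, take_dif]
  rw [sum_dif _ _ (by simp [h])]
  rw [sub_nonneg, Nat.cast_le]

lemma good_iff_dom (ρ d : List ℕ) (hlen : ρ.length = d.length) (hk : 1 ≤ ρ.length)
    (hd1 : ∀ y ∈ d, 1 ≤ y) (hsums : d.sum = ρ.sum + 1) (r : ℕ) (hr : r < ρ.length) :
    Good (dif ρ d) r ↔ Dom 0 (ρ.rotate r) (dec (d.rotate r)) := by
  have hdne : d.rotate r ≠ [] := by
    intro hcon
    rw [List.rotate_eq_nil_iff] at hcon
    rw [hcon, List.length_nil] at hlen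
    omega
  have hlast1 : 1 ≤ lastD (d.rotate r) :=
    hd1 _ ((List.mem_rotate).mp (lastD_mem _ hdne))
  have hlr : (d.rotate r).length = ρ.length := by simp [hlen]
  have hlar : (ρ.rotate r).length = ρ.length := by simp
  have hlbr : (dec (d.rotate r)).length = ρ.length := by
    rw [length_dec _ hdne, hlr]
  have hsumdr : (d.rotate r).sum = d.sum := sum_rotate d r
  have hsumar : (ρ.rotate r).sum = ρ.sum := sum_rotate ρ r
  rw [good_iff_doms ρ d hlen r (by omega),
    dom_iff_take (ρ.rotate r) (dec (d.rotate r)) (by omega) 0]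
  constructor
  · intro H i hi
    rw [hlar] at hi
    rcases Nat.lt_or_ge i ρ.length with hlt | hge
    · rw [take_dec _ _ (by omega), Nat.zero_add]
      exact H i hlt
    · have hieq : i = ρ.length := by omega
      have e1 : (dec (d.rotate r)).take i = dec (d.rotate r) :=
        List.take_of_length_le (by omega)
      have e2 : (ρ.rotate r).take i = ρ.rotate r := List.take_of_length_le (by omega)
      rw [e1, e2]
      have := sum_dec (d.rotate r) hdne hlast1
      omega
  · intro H i hi
    have := H i (by omega)
    rw [take_dec _ _ (by omega), Nat.zero_add] at this
    exact this

lemma exists_unique_good (ρ d : List ℕ) (hlen : ρ.length = d.length)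
    (hsums : d.sum = ρ.sum + 1) :
    ∃! r, r < ρ.length ∧ Good (dif ρ d) r := by
  have hsum : (dif ρ d).sum = -1 := by
    rw [sum_dif ρ d hlen, hsums]
    push_cast
    ring
  have := cycle_exists_unique (dif ρ d) hsum
  rwa [length_dif ρ d hlen] at this




lemma rotate_cancel_up (l : List ℕ) (k r : ℕ) (hl : l.length = k) (hr : r ≤ k) :
    (l.rotate (k - r)).rotate r = l := by
  rw [List.rotate_rotate, show k - r + r = k from by omega, ← hl, List.rotate_length]

lemma rotate_cancel_down (l : List ℕ) (k r : ℕ) (hl : l.length = k) (hr : r ≤ k) :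
    (l.rotate r).rotate (k - r) = l := by
  rw [List.rotate_rotate, show r + (k - r) = k from by omega, ← hl, List.rotate_length]

section E2

variable (n k : ℕ) (μ : List ℕ)

/-- the chosen good rotation -/
noncomputable def pick (ρ d : List ℕ) : ℕ :=
  Classical.epsilon (fun r => r < ρ.length ∧ Good (dif ρ d) r)

lemma pick_spec (ρ d : List ℕ) (hlen : ρ.length = d.length) (hsums : d.sum = ρ.sum + 1) :
    pick ρ d < ρ.length ∧ Good (dif ρ d) (pick ρ d) :=
  Classical.epsilon_spec (exists_unique_good ρ d hlen hsums).exists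

lemma pick_unique (ρ d : List ℕ) (hlen : ρ.length = d.length) (hsums : d.sum = ρ.sum + 1)
    (r : ℕ) (hr : r < ρ.length ∧ Good (dif ρ d) r) : r = pick ρ d :=
  (exists_unique_good ρ d hlen hsums).unique hr (pick_spec ρ d hlen hsums)

lemma rot_length_eq (ρ : List ℕ) (hρ : μ.IsRotated ρ) : ρ.length = μ.length :=
  hρ.perm.length_eq.symm

lemma rot_sum_eq (ρ : List ℕ) (hρ : μ.IsRotated ρ) : ρ.sum = μ.sum :=
  hρ.perm.sum_eq.symm

lemma hlenq (hμ : IsCompositionOf n k μ) (ρ d : List ℕ) (hρ : μ.IsRotated ρ)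
    (hd : IsCompositionOf (n+1) k d) : ρ.length = d.length := by
  rw [rot_length_eq μ ρ hρ, hμ.1, hd.1]

lemma hsumsq (hμ : IsCompositionOf n k μ) (ρ d : List ℕ) (hρ : μ.IsRotated ρ)
    (hd : IsCompositionOf (n+1) k d) : d.sum = ρ.sum + 1 := by
  rw [rot_sum_eq μ ρ hρ, hμ.2.2, hd.2.2]

lemma good_forward (hn : 1 ≤ n) (hk : 1 ≤ k) (hμ : IsCompositionOf n k μ)
    (p : List ℕ × List ℕ) (hp : CondA n μ p) (r : ℕ) (hrk : r < k) :
    Good (dif (p.1.rotate (k - r)) ((inc p.2).rotate (k - r))) r := by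
  obtain ⟨hab, ha, hb, hsa, hsb, hdom, hrot⟩ := hp
  have hla : p.1.length = k := by rw [rot_length_eq μ p.1 hrot.symm, hμ.1]
  have hlb : p.2.length = k := by omega
  have hbne : p.2 ≠ [] := by
    intro hcon
    rw [hcon] at hlb
    simp at hlb
    omega
  have hlinc : (inc p.2).length = k := by rw [length_inc _ hbne, hlb]
  have hlρ' : (p.1.rotate (k - r)).length = k := by simp [hla]
  have hld' : ((inc p.2).rotate (k - r)).length = k := by simp [hlinc]
  rw [good_iff_doms _ _ (by omega) r (by omega)]
  intro i hi
  rw [hlρ'] at hi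
  rw [rotate_cancel_up p.1 k r hla (by omega),
    rotate_cancel_up (inc p.2) k r hlinc (by omega),
    take_inc _ _ (by omega)]
  have := (dom_iff_take p.1 p.2 hab 0).mp hdom i (by omega)
  omega

lemma invFun_condA (hn : 1 ≤ n) (hk : 1 ≤ k) (hμ : IsCompositionOf n k μ)
    (ρ d : List ℕ) (hρ : μ.IsRotated ρ) (hd : IsCompositionOf (n+1) k d)
    (r : ℕ) (hrk : r < k) (hgood : Good (dif ρ d) r) :
    CondA n μ (ρ.rotate r, dec (d.rotate r)) := by
  have hρl : ρ.length = k := by rw [rot_length_eq μ ρ hρ, hμ.1]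
  have hρs : ρ.sum = n := by rw [rot_sum_eq μ ρ hρ, hμ.2.2]
  have hρp : ∀ x ∈ ρ, 1 ≤ x := fun x hx => hμ.2.1 x (hρ.perm.mem_iff.mpr hx)
  have hdl : d.length = k := hd.1
  have hdp : ∀ y ∈ d, 1 ≤ y := hd.2.1
  have hds : d.sum = n + 1 := hd.2.2
  have hlen : ρ.length = d.length := by omega
  have hsums : d.sum = ρ.sum + 1 := by omega
  have hdom : Dom 0 (ρ.rotate r) (dec (d.rotate r)) :=
    (good_iff_dom ρ d hlen (by omega) hdp hsums r (by omega)).mp hgood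
  have hdne : d.rotate r ≠ [] := by
    intro hcon
    rw [List.rotate_eq_nil_iff] at hcon
    rw [hcon] at hdl
    simp at hdl
    omega
  have hρne : ρ.rotate r ≠ [] := by
    intro hcon
    rw [List.rotate_eq_nil_iff] at hcon
    rw [hcon] at hρl
    simp at hρl
    omega
  have hlast1 : 1 ≤ lastD (d.rotate r) := hdp _ ((List.mem_rotate).mp (lastD_mem _ hdne))
  have hlastρ : 1 ≤ lastD (ρ.rotate r) := hρp _ ((List.mem_rotate).mp (lastD_mem _ hρne))
  have hlar : (ρ.rotate r).length = k := by simp [hρl]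
  have hldr : (d.rotate r).length = k := by simp [hdl]
  have hlbr : (dec (d.rotate r)).length = k := by rw [length_dec _ hdne, hldr]
  have hsar : (ρ.rotate r).sum = n := by rw [sum_rotate, hρs]
  have hsdr : (d.rotate r).sum = n + 1 := by rw [sum_rotate, hds]
  have hsumdropd : (d.rotate r).dropLast.sum + lastD (d.rotate r) = n + 1 := by
    rw [sum_dropLast_add _ hdne, hsdr]
  have hsumdropρ : (ρ.rotate r).dropLast.sum + lastD (ρ.rotate r) = n := by
    rw [sum_dropLast_add _ hρne, hsar]
  -- key: last entry of rotated d is at least 2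
  have hlast2 : 2 ≤ lastD (d.rotate r) := by
    have H := (dom_iff_take (ρ.rotate r) (dec (d.rotate r)) (by omega) 0).mp hdom
      (k - 1) (by omega)
    rw [take_dec _ _ (by omega)] at H
    have e1 : (d.rotate r).take (k - 1) = (d.rotate r).dropLast := by
      rw [dropLast_eq_take_pred, hldr]
    have e2 : (ρ.rotate r).take (k - 1) = (ρ.rotate r).dropLast := by
      rw [dropLast_eq_take_pred, hlar]
    rw [e1, e2] at H
    omega
  have hsb' : (dec (d.rotate r)).sum = n := by
    have := sum_dec (d.rotate r) hdne hlast1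
    omega
  refine ⟨by simp [hlar, hlbr], ?_, ?_, hsar, hsb', hdom, ?_⟩
  · intro x hx
    exact hρp x ((List.mem_rotate).mp hx)
  · intro x hx
    rw [dec] at hx
    rcases List.mem_append.mp hx with hx | hx
    · exact hdp x ((List.mem_rotate).mp (List.mem_of_mem_dropLast hx))
    · simp at hx
      omega
  · exact (List.IsRotated.symm ⟨r, rfl⟩).trans hρ.symm

noncomputable def equiv2 (hn : 1 ≤ n) (hk : 1 ≤ k) (hμ : IsCompositionOf n k μ) :
    (Fin k × {p : List ℕ × List ℕ // CondA n μ p}) ≃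
      ({ρ : List ℕ // μ.IsRotated ρ} × {d : List ℕ // IsCompositionOf (n+1) k d}) where
  toFun x :=
    (⟨x.2.1.1.rotate (k - x.1.1),
        (x.2.2.2.2.2.2.2.2.symm).trans ⟨k - x.1.1, rfl⟩⟩,
     ⟨(inc x.2.1.2).rotate (k - x.1.1), by
        obtain ⟨r, ⟨⟨a, b⟩, hp⟩⟩ := x
        obtain ⟨hab, ha, hb, hsa, hsb, hdom, hrot⟩ := hp
        dsimp only at hab ha hb hsa hsb hdom hrot ⊢
        have hla : a.length = k := by rw [rot_length_eq μ a hrot.symm, hμ.1]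
        have hbne : b ≠ [] := by
          intro hcon
          rw [hcon, List.length_nil] at hab
          omega
        refine ⟨by rw [List.length_rotate, length_inc _ hbne]; omega, ?_, ?_⟩
        · intro x hx
          exact mem_inc b hbne hb x ((List.mem_rotate).mp hx)
        · rw [sum_rotate, sum_inc _ hbne, hsb]⟩)
  invFun q :=
    (⟨pick q.1.1 q.2.1, by
        have h := (pick_spec q.1.1 q.2.1 (hlenq n k μ hμ q.1.1 q.2.1 q.1.2 q.2.2)
          (hsumsq n k μ hμ q.1.1 q.2.1 q.1.2 q.2.2)).1
        have hb2 : q.1.1.length = k := by rw [rot_length_eq μ q.1.1 q.1.2, hμ.1]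
        exact lt_of_lt_of_eq h hb2⟩,
     ⟨(q.1.1.rotate (pick q.1.1 q.2.1), dec (q.2.1.rotate (pick q.1.1 q.2.1))), by
        have hsp := pick_spec q.1.1 q.2.1 (hlenq n k μ hμ q.1.1 q.2.1 q.1.2 q.2.2)
          (hsumsq n k μ hμ q.1.1 q.2.1 q.1.2 q.2.2)
        have hρl : q.1.1.length = k := by rw [rot_length_eq μ q.1.1 q.1.2, hμ.1]
        exact invFun_condA n k μ hn hk hμ q.1.1 q.2.1 q.1.2 q.2.2 _
          (by omega) hsp.2⟩)
  left_inv x := by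
    obtain ⟨r, ⟨⟨a, b⟩, hp⟩⟩ := x
    have hg := good_forward n k μ hn hk hμ (a, b) hp r.1 r.2
    obtain ⟨hab, ha, hb, hsa, hsb, hdom, hrot⟩ := hp
    dsimp only at hab ha hb hsa hsb hdom hrot hg ⊢
    have hla : a.length = k := by rw [rot_length_eq μ a hrot.symm, hμ.1]
    have hbne : b ≠ [] := by
      intro hcon
      rw [hcon, List.length_nil] at hab
      omega
    have hlρ' : (a.rotate (k - r.1)).length = k := by simp [hla]
    have hlincb : (inc b).length = k := by rw [length_inc _ hbne]; omega
    have hld' : ((inc b).rotate (k - r.1)).length = k := by simp [hlincb]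
    have hpick : r.1 = pick (a.rotate (k - r.1)) ((inc b).rotate (k - r.1)) := by
      refine pick_unique _ _ ?_ ?_ r.1 ⟨by omega, hg⟩
      · omega
      · rw [sum_rotate, sum_rotate, sum_inc _ hbne]
        omega
    have e1 : (a.rotate (k - r.1)).rotate r.1 = a := rotate_cancel_up a k r.1 hla (by omega)
    have e2 : ((inc b).rotate (k - r.1)).rotate r.1 = inc b :=
      rotate_cancel_up (inc b) k r.1 hlincb (by omega)
    refine Prod.ext (Fin.ext ?_) (Subtype.ext (Prod.ext ?_ ?_))
    · exact hpick.symm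
    · show (a.rotate (k - r.1)).rotate (pick _ _) = a
      rw [← hpick, e1]
    · show dec (((inc b).rotate (k - r.1)).rotate (pick _ _)) = b
      rw [← hpick, e2, dec_inc b hbne]
  right_inv q := by
    obtain ⟨⟨ρ, hρ⟩, ⟨d, hd⟩⟩ := q
    dsimp only
    have hρl : ρ.length = k := by rw [rot_length_eq μ ρ hρ, hμ.1]
    have hdl : d.length = k := hd.1
    have hsp := pick_spec ρ d (hlenq n k μ hμ ρ d hρ hd) (hsumsq n k μ hμ ρ d hρ hd)
    have hdne : d.rotate (pick ρ d) ≠ [] := by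
      intro hcon
      rw [List.rotate_eq_nil_iff] at hcon
      rw [hcon, List.length_nil] at hdl
      omega
    have hlast1 : 1 ≤ lastD (d.rotate (pick ρ d)) :=
      hd.2.1 _ ((List.mem_rotate).mp (lastD_mem _ hdne))
    refine Prod.ext (Subtype.ext ?_) (Subtype.ext ?_)
    · show (ρ.rotate (pick ρ d)).rotate (k - pick ρ d) = ρ
      exact rotate_cancel_down ρ k (pick ρ d) hρl (by omega)
    · show (inc (dec (d.rotate (pick ρ d)))).rotate (k - pick ρ d) = d
      rw [inc_dec _ hdne hlast1]
      exact rotate_cancel_down d k (pick ρ d) hdl (by omega)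

end E2




lemma head!_mem (l : List ℕ) (h : l ≠ []) : l.head! ∈ l :=
  (List.cons_head!_tail h) ▸ List.mem_cons_self

instance finite_comp (M K : ℕ) : Finite {d : List ℕ // IsCompositionOf M K d} := by
  have hbound : ∀ (d : {d : List ℕ // IsCompositionOf M K d}) (i : Fin K),
      d.1.getD i.1 0 < M + 1 := by
    rintro ⟨d, hdl, hdp, hds⟩ i
    show d.getD i.1 0 < M + 1
    rcases Nat.lt_or_ge i.1 d.length with hi | hi
    · have hmem : d.getD i.1 0 ∈ d := by
        rw [List.getD_eq_getElem d 0 hi]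
        exact List.getElem_mem hi
      have := List.le_sum_of_mem hmem
      omega
    · rw [List.getD_eq_default d 0 hi]
      omega
  refine Finite.of_injective (fun d => (fun i => (⟨d.1.getD i.1 0, hbound d i⟩ : Fin (M+1)) :
    Fin K → Fin (M+1))) ?_
  intro d1 d2 hf
  have hl1 : d1.1.length = K := d1.2.1
  have hl2 : d2.1.length = K := d2.2.1
  refine Subtype.ext (List.ext_getElem (by omega) ?_)
  intro i hi1 hi2
  have := congrFun hf ⟨i, by omega⟩
  simp only [Fin.mk.injEq] at this
  rwa [List.getD_eq_getElem d1.1 0 hi1, List.getD_eq_getElem d2.1 0 hi2] at this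

def compOneEquiv (M : ℕ) : {d : List ℕ // IsCompositionOf (M+1) 1 d} ≃ Unit where
  toFun _ := Unit.unit
  invFun _ := ⟨[M+1], rfl, by simp, by simp⟩
  left_inv d := by
    obtain ⟨d, hdl, hdp, hds⟩ := d
    obtain ⟨x, rfl⟩ := List.length_eq_one_iff.mp hdl
    refine Subtype.ext ?_
    simp only at hds ⊢
    rw [show x = M + 1 from by simpa using hds]
  right_inv _ := rfl

lemma comp_one_empty (K : ℕ) : IsEmpty {d : List ℕ // IsCompositionOf 1 (K+2) d} := by
  refine ⟨fun d => ?_⟩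
  obtain ⟨d, hdl, hdp, hds⟩ := d
  cases d with
  | nil => simp at hdl
  | cons x t =>
    cases t with
    | nil => simp at hdl
    | cons y t =>
      have hx : 1 ≤ x := hdp x (by simp)
      have hy : 1 ≤ y := hdp y (by simp)
      simp only [List.sum_cons] at hds
      omega

def compSplitEquiv (M K : ℕ) :
    {d : List ℕ // IsCompositionOf (M+1) (K+1) d} ≃
      ({d : List ℕ // IsCompositionOf M K d} ⊕ {d : List ℕ // IsCompositionOf M (K+1) d}) where
  toFun d :=
    if h : d.1.head! = 1 then
      Sum.inl ⟨d.1.tail, by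
        obtain ⟨d, hdl, hdp, hds⟩ := d
        dsimp only at h ⊢
        have hdne : d ≠ [] := by intro hcon; rw [hcon] at hdl; simp at hdl
        have hrec : d.head! :: d.tail = d := List.cons_head!_tail hdne
        refine ⟨by simp [List.length_tail, hdl], fun x hx => hdp x (List.mem_of_mem_tail hx), ?_⟩
        have := congrArg List.sum hrec
        simp only [List.sum_cons] at this
        omega⟩
    else
      Sum.inr ⟨(d.1.head! - 1) :: d.1.tail, by
        obtain ⟨d, hdl, hdp, hds⟩ := d
        dsimp only at h ⊢
        have hdne : d ≠ [] := by intro hcon; rw [hcon] at hdl; simp at hdl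
        have hrec : d.head! :: d.tail = d := List.cons_head!_tail hdne
        have hh1 : 1 ≤ d.head! := hdp _ (head!_mem d hdne)
        have hsum : d.head! + d.tail.sum = d.sum := by
          have := congrArg List.sum hrec
          simp only [List.sum_cons] at this
          omega
        refine ⟨by simp [List.length_tail, hdl], ?_, ?_⟩
        · intro x hx
          rcases List.mem_cons.mp hx with rfl | hx
          · omega
          · exact hdp x (List.mem_of_mem_tail hx)
        · simp only [List.sum_cons]
          omega⟩
  invFun q :=
    match q with
    | Sum.inl t => ⟨1 :: t.1, by
        obtain ⟨t, htl, htp, hts⟩ := t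
        dsimp only
        refine ⟨by simp [htl], ?_, by simp only [List.sum_cons, hts]; omega⟩
        intro x hx
        rcases List.mem_cons.mp hx with rfl | hx
        · omega
        · exact htp x hx⟩
    | Sum.inr u => ⟨(u.1.head! + 1) :: u.1.tail, by
        obtain ⟨u, hul, hup, hus⟩ := u
        dsimp only
        have hune : u ≠ [] := by intro hcon; rw [hcon] at hul; simp at hul
        have hrec : u.head! :: u.tail = u := List.cons_head!_tail hune
        have hsum : u.head! + u.tail.sum = u.sum := by
          have := congrArg List.sum hrec
          simp only [List.sum_cons] at this
          omega
        refine ⟨?_, ?_, ?_⟩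
        · have := congrArg List.length hrec
          simp only [List.length_cons] at this ⊢
          omega
        · intro x hx
          rcases List.mem_cons.mp hx with rfl | hx
          · omega
          · exact hup x (List.mem_of_mem_tail hx)
        · simp only [List.sum_cons]
          omega⟩
  left_inv d := by
    obtain ⟨d, hdl, hdp, hds⟩ := d
    have hdne : d ≠ [] := by intro hcon; rw [hcon] at hdl; simp at hdl
    have hrec : d.head! :: d.tail = d := List.cons_head!_tail hdne
    have hh1 : 1 ≤ d.head! := hdp _ (head!_mem d hdne)
    dsimp only
    by_cases h : d.head! = 1
    · rw [dif_pos h]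
      refine Subtype.ext ?_
      show 1 :: d.tail = d
      rw [← h, hrec]
    · rw [dif_neg h]
      refine Subtype.ext ?_
      show (((d.head! - 1) :: d.tail).head! + 1) :: ((d.head! - 1) :: d.tail).tail = d
      rw [List.head!_cons, List.tail_cons, show d.head! - 1 + 1 = d.head! from by omega, hrec]
  right_inv q := by
    rcases q with t | u
    · dsimp only
      rw [dif_pos (show ((1 : ℕ) :: t.1).head! = 1 from rfl)]
      rfl
    · obtain ⟨u, hul, hup, hus⟩ := u
      have hune : u ≠ [] := by intro hcon; rw [hcon] at hul; simp at hul
      have hrec : u.head! :: u.tail = u := List.cons_head!_tail hune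
      have hh1 : 1 ≤ u.head! := hup _ (head!_mem u hune)
      dsimp only
      have hne1 : ((u.head! + 1) :: u.tail).head! ≠ 1 := by
        rw [List.head!_cons]
        omega
      rw [dif_neg hne1]
      refine congrArg Sum.inr (Subtype.ext ?_)
      show (((u.head! + 1) :: u.tail).head! - 1) :: ((u.head! + 1) :: u.tail).tail = u
      rw [List.head!_cons, List.tail_cons, show u.head! + 1 - 1 = u.head! from by omega, hrec]

lemma card_comp : ∀ M K : ℕ, Nat.card {d : List ℕ // IsCompositionOf (M+1) (K+1) d}
    = M.choose K := by
  intro M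
  induction M with
  | zero =>
    intro K
    cases K with
    | zero => rw [Nat.card_congr (compOneEquiv 0)]; simp
    | succ K' =>
      have := comp_one_empty K'
      rw [Nat.card_of_isEmpty, Nat.choose_eq_zero_of_lt (by omega)]
  | succ M ih =>
    intro K
    cases K with
    | zero => rw [Nat.card_congr (compOneEquiv (M+1))]; simp
    | succ K' =>
      rw [Nat.card_congr (compSplitEquiv (M+1) (K'+1)), Nat.card_sum, ih K', ih (K'+1),
        Nat.choose_succ_succ]


end Stmt7Aux
theorem stmt7 (n k : ℕ) (μ : List ℕ) (hn : 1 ≤ n) (hk : 1 ≤ k)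
    (hμ : IsCompositionOf n k μ) :
    k * Nat.card {w : List Bool // IsDyckWord n w ∧ (riseComposition w).IsRotated μ} =
      ordList μ * n.choose (k - 1) := by
  classical
  obtain ⟨k', rfl⟩ : ∃ k', k = k' + 1 := ⟨k - 1, by omega⟩
  rw [show k' + 1 - 1 = k' from rfl]
  rw [Nat.card_congr (Stmt7Aux.equiv1 n μ hn)]
  have h2 : Nat.card (Fin (k'+1) × {p : List ℕ × List ℕ // Stmt7Aux.CondA n μ p})
      = Nat.card ({ρ : List ℕ // μ.IsRotated ρ} ×
          {d : List ℕ // IsCompositionOf (n+1) (k'+1) d}) :=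
    Nat.card_congr (Stmt7Aux.equiv2 n (k'+1) μ hn hk hμ)
  rw [Nat.card_prod, Nat.card_prod,
    show Nat.card (Fin (k'+1)) = k' + 1 from by simp] at h2
  rw [h2, Stmt7Aux.card_comp n k']
  rfl
end

section
/- For all n ≥ 1, the n-th Catalan number satisfies C_n = Σ_{d ∣ n} Σ_{[μ]} (1/d)·binom(n, ord[μ]·d − 1), where the inner sum runs over all primitive cyclic compositions [μ] of n/d (equivalence classes, under cyclic rotation, of compositions of n/d all of whose cyclic rotations are distinct), and ord[μ] is the number of parts of μ. Equivalently, summing over ordinary compositions: C_n = Σ_{d ∣ n} Σ_{μ} binom(n, ℓ(μ)·d − 1)/(d·ℓ(μ)), where μ ranges over primitive compositions of n/d and ℓ(μ) is the number of parts of μ. -/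
/-- A composition (in the sense of `Composition`) is primitive if all of the cyclic
rotations of its list of blocks are distinct. -/
noncomputable def IsPrimitiveComp {v : ℕ} (c : Composition v) : Prop :=
  ordList c.blocks = c.length

open List in
lemma exists_pos_rotate (l : List ℕ) : ∃ r, 0 < r ∧ l.rotate r = l := by
  rcases eq_or_ne l [] with rfl | h
  · exact ⟨1, one_pos, by simp⟩
  · exact ⟨l.length, List.length_pos_iff.mpr h, l.rotate_length⟩

/-- minimal positive period of a list under rotation -/
def per (l : List ℕ) : ℕ := Nat.find (exists_pos_rotate l)

lemma per_pos (l : List ℕ) : 0 < per l := (Nat.find_spec (exists_pos_rotate l)).1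

lemma rotate_per (l : List ℕ) : l.rotate (per l) = l := (Nat.find_spec (exists_pos_rotate l)).2

lemma per_le {l : List ℕ} {r : ℕ} (h0 : 0 < r) (h : l.rotate r = l) : per l ≤ r :=
  Nat.find_le ⟨h0, h⟩

lemma rotate_per_mul (l : List ℕ) (q : ℕ) : l.rotate (per l * q) = l := by
  induction q with
  | zero => simp
  | succ q ih => rw [Nat.mul_succ, ← List.rotate_rotate, ih, rotate_per]

lemma rotate_eq_rotate_mod_per (l : List ℕ) (s : ℕ) : l.rotate s = l.rotate (s % per l) := by
  conv_lhs => rw [← Nat.div_add_mod s (per l)]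
  rw [← List.rotate_rotate, rotate_per_mul]

lemma per_dvd {l : List ℕ} {s : ℕ} (h : l.rotate s = l) : per l ∣ s := by
  rcases Nat.eq_zero_or_pos (s % per l) with h0 | h0
  · exact Nat.dvd_of_mod_eq_zero h0
  · have h1 := per_le h0 (by rw [← rotate_eq_rotate_mod_per]; exact h)
    have h2 := Nat.mod_lt s (per_pos l)
    omega

lemma per_dvd_length (l : List ℕ) : per l ∣ l.length := per_dvd (l.rotate_length)

lemma per_rotate (l : List ℕ) (i : ℕ) : per (l.rotate i) = per l := by
  have key : ∀ s, l.rotate s = l ↔ (l.rotate i).rotate s = l.rotate i := by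
    intro s
    rw [List.rotate_rotate, add_comm, ← List.rotate_rotate, List.rotate_eq_rotate]
  exact Nat.dvd_antisymm (per_dvd ((key _).mp (rotate_per l)))
    (per_dvd ((key _).mpr (rotate_per (l.rotate i))))

lemma getElem_rotate_self {l : List ℕ} {r : ℕ} (h : l.rotate r = l) (hlen : 0 < l.length)
    (k : ℕ) (hk : k < l.length) :
    l[k] = l[(k + r) % l.length]'(Nat.mod_lt _ hlen) := by
  have h1 := List.getElem_rotate l r k (by rw [List.length_rotate]; exact hk)
  have h2 := List.getElem_of_eq h (show k < (l.rotate r).length by rw [List.length_rotate]; exact hk)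
  rw [← h2, h1]

lemma ordList_eq_per (l : List ℕ) : ordList l = per l := by
  have aux : ∀ a b : ℕ, a < per l → b < per l → a ≤ b → l.rotate a = l.rotate b → a = b := by
    intro a b _ hb hab heq
    have hrot : (l.rotate a).rotate (b - a) = l.rotate a := by
      rw [List.rotate_rotate, show a + (b - a) = b from by omega, heq]
    have hdvd := per_dvd hrot
    rw [per_rotate] at hdvd
    rcases Nat.eq_zero_or_pos (b - a) with h0 | h0
    · omega
    · have := Nat.le_of_dvd h0 hdvd; omega
  have hset : {m : List ℕ | l.IsRotated m} = ↑((Finset.range (per l)).image l.rotate) := by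
    ext m
    simp only [Set.mem_setOf_eq, Finset.coe_image, Set.mem_image, Finset.mem_coe,
      Finset.mem_range]
    constructor
    · rintro ⟨s, rfl⟩
      exact ⟨s % per l, Nat.mod_lt _ (per_pos l), (rotate_eq_rotate_mod_per l s).symm⟩
    · rintro ⟨i, _, rfl⟩
      exact ⟨i, rfl⟩
  have h1 : ordList l = ({m : List ℕ | l.IsRotated m}).ncard := (Nat.card_coe_set_eq _).symm
  rw [h1, hset, Set.ncard_coe_finset]
  rw [Finset.card_image_of_injOn, Finset.card_range]
  intro a ha b hb hab
  simp only [Finset.coe_range, Set.mem_Iio] at ha hb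
  rcases le_total a b with h | h
  · exact aux a b ha hb h hab
  · exact (aux b a hb ha h hab.symm).symm

lemma getElem_period {l : List ℕ} {r : ℕ} (hr : 0 < r) (hrot : l.rotate r = l) :
    ∀ i (hi : i < l.length), l[i] = l[i % r]'(lt_of_le_of_lt (Nat.mod_le _ _) hi) := by
  intro i
  induction i using Nat.strong_induction_on with
  | _ i IH =>
    intro hi
    rcases lt_or_ge i r with h | h
    · simp [Nat.mod_eq_of_lt h]
    · have hir : i - r < l.length := by omega
      have key : l[i - r] = l[i] := by
        have h2 := getElem_rotate_self hrot (by omega) (i - r) hir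
        rw [h2]
        have : (i - r + r) % l.length = i := by
          rw [show i - r + r = i from by omega, Nat.mod_eq_of_lt hi]
        simp only [this]
      have h2 := IH (i - r) (by omega) hir
      rw [← key, h2]
      have : (i - r) % r = i % r := by
        conv_rhs => rw [show i = i - r + r from by omega]
        rw [Nat.add_mod_right]
      simp only [this]

lemma length_flatten_replicate (d : ℕ) (t : List ℕ) :
    (List.replicate d t).flatten.length = d * t.length := by
  simp [List.length_flatten, List.map_replicate, List.sum_replicate, smul_eq_mul]

lemma sum_flatten_replicate (d : ℕ) (t : List ℕ) :
    (List.replicate d t).flatten.sum = d * t.sum := by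
  simp [List.sum_flatten, List.map_replicate, List.sum_replicate, smul_eq_mul]

lemma getElem_flatten_replicate {t : List ℕ} (ht : t ≠ []) (d i : ℕ)
    (hi : i < (List.replicate d t).flatten.length) :
    (List.replicate d t).flatten[i] =
      t[i % t.length]'(Nat.mod_lt _ (List.length_pos_iff.mpr ht)) := by
  induction d generalizing i with
  | zero => simp at hi
  | succ d IH =>
    have he : (List.replicate (d+1) t).flatten = t ++ (List.replicate d t).flatten := by
      rw [List.replicate_succ, List.flatten_cons]
    rw [List.getElem_of_eq he hi]
    rw [he, List.length_append] at hi
    rcases lt_or_ge i t.length with h | h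
    · rw [List.getElem_append_left h]
      simp only [Nat.mod_eq_of_lt h]
    · rw [List.getElem_append_right h]
      have hi' : i - t.length < (List.replicate d t).flatten.length := by omega
      rw [IH _ hi']
      have : (i - t.length) % t.length = i % t.length := by
        conv_rhs => rw [show i = i - t.length + t.length from by omega]
        rw [Nat.add_mod_right]
      simp only [this]

lemma eq_flatten_take {l : List ℕ} (hl : l ≠ []) :
    (List.replicate (l.length / per l) (l.take (per l))).flatten = l := by
  have hlen : 0 < l.length := List.length_pos_iff.mpr hl
  have hdvd := per_dvd_length l
  have hrle : per l ≤ l.length := Nat.le_of_dvd hlen hdvd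
  have htlen : (l.take (per l)).length = per l := by
    rw [List.length_take]; omega
  have htne : l.take (per l) ≠ [] := by
    rw [← List.length_pos_iff, htlen]; exact per_pos l
  apply List.ext_getElem
  · rw [length_flatten_replicate, htlen, Nat.div_mul_cancel hdvd]
  · intro i h1 h2
    rw [getElem_flatten_replicate htne _ _ h1, List.getElem_take]
    simp only [htlen]
    exact (getElem_period (per_pos l) (rotate_per l) i h2).symm

lemma per_flatten_replicate {t : List ℕ} (ht : t ≠ []) {d : ℕ} (hd : 0 < d) :
    per (List.replicate d t).flatten = per t := by
  set l := (List.replicate d t).flatten with hldef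
  have htpos : 0 < t.length := List.length_pos_iff.mpr ht
  have hlen : l.length = d * t.length := length_flatten_replicate d t
  have hlpos : 0 < l.length := by rw [hlen]; positivity
  have hdvd : t.length ∣ l.length := by rw [hlen]; exact dvd_mul_left _ _
  have hget : ∀ i (hi : i < l.length), l[i] = t[i % t.length]'(Nat.mod_lt _ htpos) :=
    fun i hi => getElem_flatten_replicate ht d i hi
  have lper : ∀ j (hj : j < l.length), l[j] = l[(j + per l) % l.length]'(Nat.mod_lt _ hlpos) :=
    fun j hj => getElem_rotate_self (rotate_per l) hlpos j hj
  have tper : ∀ j (hj : j < t.length), t[j] = t[(j + per t) % t.length]'(Nat.mod_lt _ htpos) :=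
    fun j hj => getElem_rotate_self (rotate_per t) htpos j hj
  have lrot : l.rotate (per t) = l := by
    apply List.ext_getElem
    · rw [List.length_rotate]
    · intro i h1 h2
      rw [List.getElem_rotate, hget _ (Nat.mod_lt _ hlpos), hget _ h2]
      have hidx : (i + per t) % l.length % t.length = (i % t.length + per t) % t.length := by
        rw [Nat.mod_mod_of_dvd _ hdvd]
        conv_lhs => rw [Nat.add_mod]
        conv_rhs => rw [Nat.add_mod, Nat.mod_mod_of_dvd _ (dvd_refl t.length)]
      simp only [hidx]
      exact (tper _ (Nat.mod_lt _ htpos)).symm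
  have trot : t.rotate (per l) = t := by
    apply List.ext_getElem
    · rw [List.length_rotate]
    · intro j h1 h2
      have hjl : j < l.length := lt_of_lt_of_le h2 (by rw [hlen]; calc t.length = 1 * t.length := (one_mul _).symm
                                                                     _ ≤ d * t.length := Nat.mul_le_mul_right _ hd)
      rw [List.getElem_rotate]
      have e1 : t[j]'h2 = l[j]'hjl := by
        rw [hget _ hjl]
        simp only [Nat.mod_eq_of_lt h2]
      rw [e1, lper _ hjl, hget _ (Nat.mod_lt _ hlpos)]
      have hidx : (j + per l) % l.length % t.length = (j + per l) % t.length := by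
        rw [Nat.mod_mod_of_dvd _ hdvd]
      simp only [hidx]
  exact Nat.dvd_antisymm (per_dvd lrot) (per_dvd trot)

lemma per_take_per {l : List ℕ} (hl : l ≠ []) : per (l.take (per l)) = per l := by
  have h1 := eq_flatten_take hl
  have hlen : 0 < l.length := List.length_pos_iff.mpr hl
  have hrle : per l ≤ l.length := Nat.le_of_dvd hlen (per_dvd_length l)
  have htne : l.take (per l) ≠ [] := by
    rw [← List.length_pos_iff, List.length_take]
    have := per_pos l; omega
  have hd : 0 < l.length / per l := Nat.div_pos hrle (per_pos l)
  conv_rhs => rw [← h1]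
  exact (per_flatten_replicate htne hd).symm

lemma compositionAsSetEquiv_card {n : ℕ} (hn : 1 ≤ n) (c : CompositionAsSet n) :
    (compositionAsSetEquiv n c).card + 1 = c.length := by
  classical
  have h0 : (0 : Fin (n+1)) ∈ c.boundaries := c.zero_mem
  have hl : Fin.last n ∈ c.boundaries := c.getLast_mem
  have hne : (Fin.last n) ≠ (0 : Fin (n+1)) := by
    intro h
    have := congrArg Fin.val h
    simp [Fin.val_last] at this
    omega
  have h2 : 1 < c.boundaries.card := Finset.one_lt_card.mpr ⟨0, h0, Fin.last n, hl, hne.symm⟩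
  have hcard : (compositionAsSetEquiv n c).card
      = ((c.boundaries.erase 0).erase (Fin.last n)).card := by
    apply Finset.card_bij (fun i _ => (⟨1 + i.1, by have := i.isLt; omega⟩ : Fin (n+1)))
    · intro i hi
      simp only [compositionAsSetEquiv, Equiv.coe_fn_mk, Set.toFinset_setOf,
        Finset.mem_filter, Finset.mem_univ, true_and] at hi
      rw [Finset.mem_erase, Finset.mem_erase]
      have hval := i.isLt
      refine ⟨?_, ?_, ?_⟩
      · intro h; have := congrArg Fin.val h; simp [Fin.val_last] at this; omega
      · intro h; have := congrArg Fin.val h; simp at this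
      · convert hi using 2
    · intro i _ j _ h
      have := congrArg Fin.val h
      simp only at this
      exact Fin.ext (by omega)
    · intro j hj
      rw [Finset.mem_erase, Finset.mem_erase] at hj
      obtain ⟨hj1, hj2, hj3⟩ := hj
      have hjv : j.1 ≠ n := by intro h; exact hj1 (Fin.ext (by simp [Fin.val_last, h]))
      have hjv0 : j.1 ≠ 0 := by intro h; exact hj2 (Fin.ext (by simp [h]))
      have hjlt : j.1 < n + 1 := j.isLt
      refine ⟨⟨j.1 - 1, by omega⟩, ?_, ?_⟩
      · simp only [compositionAsSetEquiv, Equiv.coe_fn_mk, Set.toFinset_setOf,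
          Finset.mem_filter, Finset.mem_univ, true_and]
        convert hj3 using 2
        omega
      · exact Fin.ext (by simp only [Fin.val_mk]; omega)
  rw [hcard, Finset.card_erase_of_mem, Finset.card_erase_of_mem h0]
  · rw [CompositionAsSet.length]
    omega
  · exact Finset.mem_erase.mpr ⟨hne, hl⟩

lemma card_comp_length (n k : ℕ) (hn : 1 ≤ n) (hk : 1 ≤ k) [DecidablePred fun c : Composition n => c.length = k] :
    (Finset.univ.filter (fun c : Composition n => c.length = k)).card = (n-1).choose (k-1) := by
  classical
  have h1 : (Finset.univ.filter (fun c : Composition n => c.length = k)).card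
      = Fintype.card {c : Composition n // c.length = k} := (Fintype.card_subtype _).symm
  rw [h1]
  have e1 : {c : Composition n // c.length = k} ≃ {c : CompositionAsSet n // c.length = k} :=
    (compositionEquiv n).subtypeEquiv (by
      intro c
      rw [show (compositionEquiv n) c = c.toCompositionAsSet from rfl,
        Composition.toCompositionAsSet_length])
  have e2 : {c : CompositionAsSet n // c.length = k} ≃ {s : Finset (Fin (n-1)) // s.card = k - 1} :=
    (compositionAsSetEquiv n).subtypeEquiv (by
      intro c
      have := compositionAsSetEquiv_card hn c
      constructor
      · intro h; omega
      · intro h; omega)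
  rw [Fintype.card_congr (e1.trans e2), Fintype.card_finset_len, Fintype.card_fin]


lemma comp_blocks_ne {n : ℕ} (hn : 0 < n) (μ : Composition n) : μ.blocks ≠ [] := by
  intro h
  have h2 := μ.blocks_sum
  rw [h] at h2
  simp at h2
  omega

/-- concatenating `d` copies of a composition of `n / d` -/
def compMu {n : ℕ} (d : ℕ) (p : Composition (n / d)) (hd : d ∣ n) (hd0 : 0 < d) :
    Composition n where
  blocks := (List.replicate d p.blocks).flatten
  blocks_pos := by
    intro i hi
    rw [List.mem_flatten] at hi
    obtain ⟨L, hL, hiL⟩ := hi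
    rw [List.eq_of_mem_replicate hL] at hiL
    exact p.blocks_pos hiL
  blocks_sum := by rw [sum_flatten_replicate, p.blocks_sum, Nat.mul_div_cancel' hd]

lemma comp_dvd {n : ℕ} (hn : 0 < n) (μ : Composition n) :
    (μ.blocks.length / per μ.blocks) ∣ n ∧ 0 < μ.blocks.length / per μ.blocks := by
  have hne := comp_blocks_ne hn μ
  have hflat := eq_flatten_take hne
  constructor
  · refine ⟨(μ.blocks.take (per μ.blocks)).sum, ?_⟩
    conv_lhs => rw [← μ.blocks_sum, ← hflat]
    exact sum_flatten_replicate _ _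
  · exact Nat.div_pos (Nat.le_of_dvd (List.length_pos_iff.mpr hne) (per_dvd_length _)) (per_pos _)

/-- the primitive part of a composition -/
def primPart {n : ℕ} (hn : 0 < n) (μ : Composition n) :
    Composition (n / (μ.blocks.length / per μ.blocks)) where
  blocks := μ.blocks.take (per μ.blocks)
  blocks_pos := fun hi => μ.blocks_pos (List.mem_of_mem_take hi)
  blocks_sum := by
    have hne := comp_blocks_ne hn μ
    have hflat := eq_flatten_take hne
    have hsum : n = (μ.blocks.length / per μ.blocks) * (μ.blocks.take (per μ.blocks)).sum := by
      conv_lhs => rw [← μ.blocks_sum, ← hflat]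
      exact sum_flatten_replicate _ _
    have hd0 := (comp_dvd hn μ).2
    exact (Nat.div_eq_of_eq_mul_right hd0 hsum).symm

lemma primPart_length {n : ℕ} (hn : 0 < n) (μ : Composition n) :
    (primPart hn μ).length = per μ.blocks := by
  have hne := comp_blocks_ne hn μ
  have h1 : per μ.blocks ≤ μ.blocks.length :=
    Nat.le_of_dvd (List.length_pos_iff.mpr hne) (per_dvd_length _)
  rw [← Composition.blocks_length]
  show (μ.blocks.take (per μ.blocks)).length = _
  rw [List.length_take]
  omega

lemma sigma_comp_ext {n : ℕ} {x y : Σ d : ℕ, Composition (n / d)} (h1 : x.1 = y.1)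
    (h2 : x.2.blocks = y.2.blocks) : x = y := by
  obtain ⟨a, p⟩ := x
  obtain ⟨b, q⟩ := y
  dsimp at h1 h2
  subst h1
  exact congrArg (Sigma.mk a) (Composition.ext h2)

lemma compMu_length {n : ℕ} (d : ℕ) (p : Composition (n / d)) (hd : d ∣ n) (hd0 : 0 < d) :
    (compMu d p hd hd0).length = d * p.length := by
  rw [← Composition.blocks_length]
  show (List.replicate d p.blocks).flatten.length = _
  rw [length_flatten_replicate, Composition.blocks_length]

lemma flatten_replicate_split (d : ℕ) (hd : 0 < d) (b : List ℕ) :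
    (List.replicate d b).flatten = b ++ (List.replicate (d-1) b).flatten := by
  obtain ⟨e, rfl⟩ : ∃ e, d = e + 1 := ⟨d-1, by omega⟩
  simp [List.replicate_succ]

lemma catalan_sum_aux (n : ℕ) (hn : 1 ≤ n) :
    ∑ i ∈ Finset.range n, ((n-1).choose i : ℚ) * ((n.choose i : ℚ) / ((i : ℚ)+1)) = catalan n := by
  have hnq : (n : ℚ) ≠ 0 := by positivity
  have key : ∀ i : ℕ, ((n-1).choose i : ℚ) * ((n.choose i : ℚ) / ((i:ℚ)+1))
      = (n.choose (i+1) : ℚ) * (n.choose i) / n := by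
    intro i
    have h := Nat.add_one_mul_choose_eq (n-1) i
    rw [show n-1+1 = n from by omega] at h
    have hq : (n : ℚ) * ((n-1).choose i) = (n.choose (i+1) : ℚ) * ((i:ℚ)+1) := by
      exact_mod_cast congrArg (Nat.cast (R := ℚ)) h
    have hi : ((i:ℚ)+1) ≠ 0 := by positivity
    have h2 : ((n-1).choose i : ℚ) / ((i:ℚ)+1) = (n.choose (i+1):ℚ)/(n:ℚ) := by
      rw [div_eq_div_iff hi hnq]
      linarith [hq]
    calc ((n-1).choose i : ℚ) * ((n.choose i : ℚ) / ((i:ℚ)+1))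
        = (((n-1).choose i : ℚ) / ((i:ℚ)+1)) * (n.choose i) := by ring
      _ = ((n.choose (i+1):ℚ)/(n:ℚ)) * (n.choose i) := by rw [h2]
      _ = (n.choose (i+1) : ℚ) * (n.choose i) / n := by ring
  rw [Finset.sum_congr rfl (fun i _ => key i), ← Finset.sum_div]
  have vand : (∑ i ∈ Finset.range n, n.choose (i+1) * n.choose i) = (2*n).choose (n-1) := by
    rw [two_mul, Nat.add_choose_eq, Finset.Nat.sum_antidiagonal_eq_sum_range_succ_mk,
      show (n-1).succ = n from by omega]
    refine Finset.sum_congr rfl ?_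
    intro k hk
    rw [Finset.mem_range] at hk
    have h2 := Nat.choose_symm (show n-1-k ≤ n by omega)
    rw [show n - (n-1-k) = k+1 from by omega] at h2
    rw [← h2, mul_comm]
  have sumq : (∑ i ∈ Finset.range n, (n.choose (i+1) : ℚ) * (n.choose i))
      = ((2*n).choose (n-1) : ℚ) := by
    rw [← vand]
    push_cast
    ring
  rw [sumq]
  have cat : ((2*n).choose (n-1) : ℕ) = n * catalan n := by
    have h1 := succ_mul_catalan_eq_centralBinom n
    have h3 := Nat.choose_succ_right_eq (2*n) (n-1)
    rw [show n-1+1 = n from by omega, show 2*n - (n-1) = n+1 from by omega] at h3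
    have h2 : Nat.centralBinom n = (2*n).choose n := rfl
    have h4 : (n * catalan n) * (n+1) = ((2*n).choose (n-1)) * (n+1) := by
      calc (n * catalan n) * (n+1) = n * ((n+1) * catalan n) := by ring
        _ = n * (2*n).choose n := by rw [h1, h2]
        _ = (2*n).choose n * n := by ring
        _ = _ := h3
    exact (Nat.eq_of_mul_eq_mul_right (by omega) h4).symm
  rw [cat]
  push_cast
  rw [mul_comm, mul_div_assoc, div_self hnq, mul_one]

open scoped Classical in
theorem stmt9 (n : ℕ) (hn : 1 ≤ n) :
    (catalan n : ℚ) =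
      ∑ d ∈ n.divisors, ∑ c ∈ Finset.univ.filter
          (fun c : Composition (n / d) => IsPrimitiveComp c),
        (n.choose (c.length * d - 1) : ℚ) / (d * c.length) := by
  have hn0 : 0 < n := hn
  rw [Finset.sum_sigma']
  have hA : ∑ x ∈ n.divisors.sigma
        (fun d => Finset.univ.filter (fun c : Composition (n / d) => IsPrimitiveComp c)),
        ((n.choose (x.snd.length * x.fst - 1) : ℚ) / (↑x.fst * ↑x.snd.length))
      = ∑ μ ∈ (Finset.univ : Finset (Composition n)),
        ((n.choose (μ.length - 1) : ℚ) / (μ.length : ℚ)) := by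
    refine Finset.sum_bij'
      (fun x hx => compMu x.1 x.2 ((Nat.mem_divisors.mp (Finset.mem_sigma.mp hx).1).1)
        (Nat.pos_of_mem_divisors (Finset.mem_sigma.mp hx).1))
      (fun μ _ => ⟨μ.blocks.length / per μ.blocks, primPart hn0 μ⟩)
      (fun x hx => Finset.mem_univ _) ?_ ?_ ?_ ?_
    · -- hj : membership in the sigma finset
      intro μ _
      rw [Finset.mem_sigma]
      have hne := comp_blocks_ne hn0 μ
      refine ⟨Nat.mem_divisors.mpr ⟨(comp_dvd hn0 μ).1, by omega⟩, ?_⟩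
      rw [Finset.mem_filter]
      refine ⟨Finset.mem_univ _, ?_⟩
      show ordList (primPart hn0 μ).blocks = (primPart hn0 μ).length
      rw [primPart_length hn0 μ]
      show ordList (μ.blocks.take (per μ.blocks)) = _
      rw [ordList_eq_per, per_take_per hne]
    · -- left inverse
      rintro ⟨d, p⟩ hx
      rw [Finset.mem_sigma] at hx
      obtain ⟨hd1, hp1⟩ := hx
      have hd : d ∣ n := (Nat.mem_divisors.mp hd1).1
      have hd0 : 0 < d := Nat.pos_of_mem_divisors hd1
      have hnd : 0 < n / d := Nat.div_pos (Nat.le_of_dvd hn0 hd) hd0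
      have hbne : p.blocks ≠ [] := comp_blocks_ne hnd p
      have hbpos : 0 < p.blocks.length := List.length_pos_iff.mpr hbne
      have hperb : per p.blocks = p.blocks.length := by
        rw [Finset.mem_filter] at hp1
        have h2 := hp1.2
        rw [IsPrimitiveComp, ordList_eq_per, ← Composition.blocks_length] at h2
        exact h2
      have hblocks : (compMu d p hd hd0).blocks = (List.replicate d p.blocks).flatten := rfl
      have hperμ : per (compMu d p hd hd0).blocks = p.blocks.length := by
        rw [hblocks, per_flatten_replicate hbne hd0, hperb]
      have hlenμ : (compMu d p hd hd0).blocks.length = d * p.blocks.length := by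
        rw [hblocks, length_flatten_replicate]
      have hdval : (compMu d p hd hd0).blocks.length / per (compMu d p hd hd0).blocks = d := by
        rw [hperμ, hlenμ, Nat.mul_div_cancel _ hbpos]
      apply sigma_comp_ext
      · exact hdval
      · show (compMu d p hd hd0).blocks.take (per (compMu d p hd hd0).blocks) = p.blocks
        rw [hperμ, hblocks, flatten_replicate_split d hd0 p.blocks, List.take_left]
    · -- right inverse
      intro μ _
      apply Composition.ext
      show (List.replicate (μ.blocks.length / per μ.blocks)
        (μ.blocks.take (per μ.blocks))).flatten = μ.blocks
      exact eq_flatten_take (comp_blocks_ne hn0 μ)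
    · -- values agree
      rintro ⟨d, p⟩ hx
      simp only [compMu_length]
      rw [mul_comm p.length d]
      push_cast
      ring
  rw [hA]
  -- now sum over all compositions
  have hB : ∑ μ ∈ (Finset.univ : Finset (Composition n)),
      ((n.choose (μ.length - 1) : ℚ) / (μ.length : ℚ)) = catalan n := by
    rw [← Finset.sum_fiberwise_of_maps_to (t := Finset.range (n+1)) (g := Composition.length)
      (fun μ _ => Finset.mem_range.mpr (Nat.lt_succ_of_le μ.length_le))]
    have hinner : ∀ k ∈ Finset.range (n+1),
        (∑ μ ∈ Finset.univ.filter (fun μ : Composition n => μ.length = k),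
          ((n.choose (μ.length - 1) : ℚ) / (μ.length : ℚ)))
        = ((Finset.univ.filter (fun μ : Composition n => μ.length = k)).card : ℚ)
            * ((n.choose (k-1) : ℚ) / (k : ℚ)) := by
      intro k _
      rw [Finset.sum_congr rfl (fun μ hμ => by rw [(Finset.mem_filter.mp hμ).2]),
        Finset.sum_const, nsmul_eq_mul]
    rw [Finset.sum_congr rfl hinner, Finset.sum_range_succ']
    have hzero : ((Finset.univ.filter (fun μ : Composition n => μ.length = 0)).card : ℚ)
        * ((n.choose (0-1) : ℚ) / ((0:ℕ) : ℚ)) = 0 := by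
      have he : (Finset.univ.filter (fun μ : Composition n => μ.length = 0)) = ∅ := by
        rw [Finset.filter_eq_empty_iff]
        intro μ _
        have := μ.length_pos_of_pos hn0
        omega
      rw [he]
      simp
    rw [hzero, add_zero]
    have hc : ∀ i ∈ Finset.range n,
        ((Finset.univ.filter (fun μ : Composition n => μ.length = i+1)).card : ℚ)
          * ((n.choose (i+1-1) : ℚ) / ((i+1 : ℕ) : ℚ))
        = ((n-1).choose i : ℚ) * ((n.choose i : ℚ) / ((i : ℚ)+1)) := by
      intro i _
      rw [card_comp_length n (i+1) hn (by omega)]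
      push_cast
      norm_num
    rw [Finset.sum_congr rfl hc]
    exact catalan_sum_aux n hn
  rw [hB]
end
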